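/- arXiv:2208.09876 — 8 statements merged into one kernel-verified Lean document; each statement's English description precedes it below -/
import Mathlib

section
/- Fix a real λ > 1. If x ∈ [0, 1) satisfies x = exp(λ·(x − 1)), then x < λ⁻². (Consequently, the extinction probability q_λ of a Poisson(λ) Galton–Watson tree, which is the minimal root in [0,1] of x = e^{−λ+λx}, satisfies q_λ < λ⁻².) -/
/-!
Taking logarithms, a root `x ∈ (0, 1)` of `x = exp (λ (x - 1))` satisfies `λ (1 - x) = -log x`.
With `s = √x`, the inequality `x < λ⁻²` becomes `-2 log s < s⁻¹ - s`, i.e. `sinh (log s) < log s`,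
which holds because `log s < 0`.
-/

open Real

theorem Real.sub_inv_lt_two_mul_log {s : ℝ} (hs0 : 0 < s) (hs1 : s < 1) :
    s - s⁻¹ < 2 * log s := by
  have h := sinh_lt_self_iff.mpr (log_neg hs0 hs1)
  rw [sinh_log hs0] at h
  linarith

theorem lt_inv_sq_of_log_eq_mul_sub_one {l x : ℝ} (hx0 : 0 < x) (hx1 : x < 1)
    (hlog : log x = l * (x - 1)) : x < l⁻¹ ^ 2 := by
  set s := √x
  have hs0 : 0 < s := sqrt_pos.mpr hx0
  have hsx : s ^ 2 = x := sq_sqrt hx0.le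
  have hs1 : s < 1 := by nlinarith
  have hl : 0 < l := by nlinarith [log_neg hx0 hx1]
  have hls : l * s < 1 := by
    have h : s - s⁻¹ < l * (s ^ 2 - 1) := by
      rw [← hsx, log_pow] at hlog
      push_cast at hlog
      linarith [sub_inv_lt_two_mul_log hs0 hs1]
    nlinarith [mul_lt_mul_of_pos_left h hs0, mul_inv_cancel₀ hs0.ne']
  calc x = s ^ 2 := hsx.symm
    _ < l⁻¹ ^ 2 := by
      gcongr
      rwa [← mul_one l⁻¹, lt_inv_mul_iff₀ hl]

theorem stmt_1_general (l : ℝ) (x : ℝ) (hx1 : x < 1)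
    (hfix : x = Real.exp (l * (x - 1))) : x < l⁻¹ ^ 2 := by
  have hxpos : 0 < x := hfix ▸ exp_pos _
  refine lt_inv_sq_of_log_eq_mul_sub_one hxpos hx1 ?_
  rw [congrArg log hfix, log_exp]

/-- Fix a real `λ > 1`. If `x ∈ [0, 1)` satisfies `x = exp(λ·(x − 1))`, then `x < λ⁻²`.
(Consequently the extinction probability of a Poisson(λ) Galton–Watson tree is less
than `λ⁻²`.) -/
theorem stmt_1 (l : ℝ) (hl : 1 < l) (x : ℝ) (hx0 : 0 ≤ x) (hx1 : x < 1)
    (hfix : x = Real.exp (l * (x - 1))) : x < l⁻¹ ^ 2 :=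
  stmt_1_general l x hx1 hfix
end

section
/- Fix λ > 0 and set μ_k = λ^k e^{−λ}/k! for k ∈ ℕ. There exists M such that for all integers m ≥ M and all integers k with 0 ≤ k ≤ (log m)/(100 log log m), if N and N′ are independent random variables each with the Poisson(m·μ_k) distribution, then P(N = N′) ≤ m^{−1/100}. Equivalently, ∑_{j=0}^∞ ((m μ_k)^j e^{−m μ_k}/j!)² ≤ m^{−1/100}. -/
/-!
For `μ ≥ 1` the Poisson(`μ`) weights `p j` are unimodal with mode `n = ⌊μ⌋₊`, and the `T + 1`
weights `p n, …, p (n + T)`, `T = ⌈√μ⌉₊`, all lie within a factor `((n + T) / μ) ^ T ≤ e⁴` of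
`p n` from below, while summing to at most `1`. Hence `max p ≤ e⁴ / √μ`, and the collision
probability `∑ p j ^ 2 ≤ max p · ∑ p j` obeys the same bound. For `k ≤ log m / (100 log log m)`
one has `log k! ≤ k log k ≤ k log log m ≤ log m / 100`, so `μ = m μ_k ≥ e^{-λ} m ^ (98/100)` and
`e⁴ / √μ ≤ m ^ (-1/100)` once `m` is large.
-/

open Real Filter

noncomputable def poissonProb (μ : ℝ) (j : ℕ) : ℝ := μ ^ j * exp (-μ) / j.factorial

section PoissonProb

variable {μ : ℝ}

lemma poissonProb_nonneg (hμ : 0 ≤ μ) (j : ℕ) : 0 ≤ poissonProb μ j := by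
  unfold poissonProb; positivity

lemma poissonProb_pos (hμ : 0 < μ) (j : ℕ) : 0 < poissonProb μ j := by
  unfold poissonProb; positivity

lemma poissonProb_succ (μ : ℝ) (j : ℕ) :
    poissonProb μ (j + 1) = poissonProb μ j * (μ / (j + 1)) := by
  simp only [poissonProb, Nat.factorial_succ, Nat.cast_mul, Nat.cast_succ, pow_succ]
  field_simp

lemma hasSum_poissonProb (hμ : 0 ≤ μ) : HasSum (poissonProb μ) 1 := by
  convert ProbabilityTheory.hasSum_one_poissonMeasure ⟨μ, hμ⟩ using 2 with j
  change μ ^ j * exp (-μ) / j.factorial = exp (-μ) * μ ^ j / j.factorial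
  ring

lemma log_poissonProb (hμ : 0 < μ) (j : ℕ) :
    log (poissonProb μ j) = j * log μ - μ - log j.factorial := by
  have : (0 : ℝ) < j.factorial := mod_cast j.factorial_pos
  rw [poissonProb, log_div (by positivity) this.ne', log_mul (by positivity) (exp_pos _).ne',
    log_pow, log_exp]
  ring

lemma poissonProb_le_succ (hμ : 0 ≤ μ) {j : ℕ} (h : (j : ℝ) + 1 ≤ μ) :
    poissonProb μ j ≤ poissonProb μ (j + 1) := by
  rw [poissonProb_succ]
  refine le_mul_of_one_le_right (poissonProb_nonneg hμ j) ?_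
  rwa [one_le_div (by positivity)]

lemma poissonProb_succ_le (hμ : 0 ≤ μ) {j : ℕ} (h : μ ≤ (j : ℝ) + 1) :
    poissonProb μ (j + 1) ≤ poissonProb μ j := by
  rw [poissonProb_succ]
  refine mul_le_of_le_one_right (poissonProb_nonneg hμ j) ?_
  rwa [div_le_one (by positivity)]

lemma poissonProb_antitoneOn (hμ : 0 ≤ μ) : AntitoneOn (poissonProb μ) {j | ⌊μ⌋₊ ≤ j} :=
  antitoneOn_nat_Ici_of_succ_le fun j hj ↦ poissonProb_succ_le hμ <|
    (Nat.lt_floor_add_one μ).le.trans (by exact_mod_cast Nat.add_le_add_right hj 1)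

lemma poissonProb_monotoneOn (hμ : 0 ≤ μ) : MonotoneOn (poissonProb μ) (Set.Iic ⌊μ⌋₊) := by
  intro a _ b hb hab
  induction b, hab using Nat.le_induction with
  | base => rfl
  | succ b _ ih =>
    have hb' : ((b + 1 : ℕ) : ℝ) ≤ μ := (Nat.cast_le.mpr hb).trans (Nat.floor_le hμ)
    exact (ih (Nat.le_of_succ_le hb)).trans (poissonProb_le_succ hμ (mod_cast hb'))

lemma poissonProb_le_floor (hμ : 0 ≤ μ) (j : ℕ) : poissonProb μ j ≤ poissonProb μ ⌊μ⌋₊ := by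
  rcases le_total j ⌊μ⌋₊ with h | h
  · exact poissonProb_monotoneOn hμ h (Set.mem_Iic.2 le_rfl) h
  · exact poissonProb_antitoneOn hμ (le_refl ⌊μ⌋₊) h h

lemma poissonProb_mul_pow_le (hμ : 0 ≤ μ) (a t : ℕ) :
    poissonProb μ a * μ ^ t ≤ ((a : ℝ) + t) ^ t * poissonProb μ (a + t) := by
  induction t with
  | zero => simp
  | succ t ih =>
    have hstep : poissonProb μ (a + t) * μ = ((a : ℝ) + t + 1) * poissonProb μ (a + t + 1) := by
      rw [poissonProb_succ]; push_cast; field_simp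
    calc poissonProb μ a * μ ^ (t + 1) = poissonProb μ a * μ ^ t * μ := by ring
      _ ≤ ((a : ℝ) + t) ^ t * poissonProb μ (a + t) * μ := by gcongr
      _ = ((a : ℝ) + t) ^ t * ((a + t + 1) * poissonProb μ (a + t + 1)) := by rw [mul_assoc, hstep]
      _ ≤ ((a : ℝ) + t + 1) ^ t * ((a + t + 1) * poissonProb μ (a + t + 1)) := by
        gcongr ?_ ^ _ * _
        · exact mul_nonneg (by positivity) (poissonProb_nonneg hμ _)
        · linarith
      _ = ((a : ℝ) + ↑(t + 1)) ^ (t + 1) * poissonProb μ (a + (t + 1)) := by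
        rw [← add_assoc]; push_cast; ring

lemma succ_mul_poissonProb_floor_add_le (hμ : 0 ≤ μ) (T : ℕ) :
    ((T : ℝ) + 1) * poissonProb μ (⌊μ⌋₊ + T) ≤ 1 := by
  set n := ⌊μ⌋₊
  calc ((T : ℝ) + 1) * poissonProb μ (n + T)
        = ∑ _t ∈ Finset.range (T + 1), poissonProb μ (n + T) := by simp
    _ ≤ ∑ t ∈ Finset.range (T + 1), poissonProb μ (n + t) := by
        refine Finset.sum_le_sum fun t ht ↦ poissonProb_antitoneOn hμ (Nat.le_add_right n t)
          (Nat.le_add_right n T) ?_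
        simp only [Finset.mem_range] at ht
        omega
    _ = ∑ j ∈ Finset.Ico n (n + (T + 1)), poissonProb μ j := by
        rw [Finset.sum_Ico_eq_sum_range]; simp
    _ ≤ 1 := sum_le_hasSum _ (fun j _ ↦ poissonProb_nonneg hμ j) (hasSum_poissonProb hμ)

lemma add_pow_le_exp_mul_pow {x y : ℝ} (hx : 0 < x) (hy : 0 ≤ y) (t : ℕ) :
    (x + y) ^ t ≤ exp (t * y / x) * x ^ t := by
  calc (x + y) ^ t = (1 + y / x) ^ t * x ^ t := by rw [← mul_pow]; field_simp
    _ ≤ exp (y / x) ^ t * x ^ t := by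
        gcongr
        rw [add_comm]; exact add_one_le_exp _
    _ = exp (t * y / x) * x ^ t := by rw [← exp_nat_mul, mul_div_assoc]

lemma poissonProb_le_exp_four_div_sqrt (hμ : 1 ≤ μ) (j : ℕ) :
    poissonProb μ j ≤ exp 4 / √μ := by
  have hμ0 : 0 < μ := by linarith
  set n := ⌊μ⌋₊
  set T := ⌈√μ⌉₊
  have hsqrt_pos : 0 < √μ := sqrt_pos.mpr hμ0
  have hsqrt_le : √μ ≤ T := Nat.le_ceil _
  have hT_lt : (T : ℝ) < √μ + 1 := Nat.ceil_lt_add_one hsqrt_pos.le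
  have hT_sq : (T : ℝ) * T ≤ 4 * μ := by
    nlinarith [sq_sqrt hμ0.le, one_le_sqrt.mpr hμ]
  have hwindow : ((n : ℝ) + T) ^ T ≤ exp 4 * μ ^ T :=
    calc ((n : ℝ) + T) ^ T ≤ (μ + T) ^ T := by gcongr; exact Nat.floor_le hμ0.le
      _ ≤ exp (T * T / μ) * μ ^ T := add_pow_le_exp_mul_pow hμ0 T.cast_nonneg T
      _ ≤ exp 4 * μ ^ T := by
        gcongr
        rwa [div_le_iff₀ hμ0]
  have hmode : poissonProb μ n ≤ exp 4 * poissonProb μ (n + T) := by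
    have := (poissonProb_mul_pow_le hμ0.le n T).trans
      (mul_le_mul_of_nonneg_right hwindow (poissonProb_nonneg hμ0.le _))
    rw [mul_comm (exp 4), mul_assoc] at this
    exact le_of_mul_le_mul_right (by linarith) (pow_pos hμ0 T)
  have htail : poissonProb μ (n + T) ≤ 1 / √μ := by
    rw [le_div_iff₀ hsqrt_pos]
    nlinarith [succ_mul_poissonProb_floor_add_le hμ0.le T, poissonProb_nonneg hμ0.le (n + T)]
  calc poissonProb μ j ≤ poissonProb μ n := poissonProb_le_floor hμ0.le j
    _ ≤ exp 4 * (1 / √μ) := hmode.trans (by gcongr)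
    _ = exp 4 / √μ := mul_one_div _ _

end PoissonProb

lemma tsum_sq_le_mul_of_hasSum {ι : Type*} {f : ι → ℝ} {s c : ℝ} (hf : HasSum f s)
    (hf0 : ∀ i, 0 ≤ f i) (hfc : ∀ i, f i ≤ c) : ∑' i, f i ^ 2 ≤ c * s := by
  have hle : ∀ i, f i ^ 2 ≤ c * f i := fun i ↦ by
    rw [sq]; exact mul_le_mul_of_nonneg_right (hfc i) (hf0 i)
  have hsq : Summable fun i ↦ f i ^ 2 :=
    .of_nonneg_of_le (fun i ↦ sq_nonneg _) hle (hf.summable.mul_left c)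
  calc ∑' i, f i ^ 2 ≤ ∑' i, c * f i := hsq.tsum_le_tsum hle (hf.summable.mul_left c)
    _ = c * s := by rw [tsum_mul_left, hf.tsum_eq]

lemma tsum_poissonProb_sq_le {μ : ℝ} (hμ : 1 ≤ μ) :
    ∑' j, poissonProb μ j ^ 2 ≤ exp 4 / √μ := by
  simpa using tsum_sq_le_mul_of_hasSum (hasSum_poissonProb (by linarith))
    (poissonProb_nonneg (by linarith)) (poissonProb_le_exp_four_div_sqrt hμ)

lemma log_factorial_le_mul_log (k : ℕ) : log k.factorial ≤ k * log k := by
  rcases k.eq_zero_or_pos with rfl | hk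
  · simp
  rw [← log_pow]
  exact log_le_log (mod_cast k.factorial_pos) (mod_cast k.factorial_le_pow)

lemma le_log_poissonProb {l x : ℝ} (hl : 0 < l) (hx : 1 ≤ x) (hL : 1 ≤ log (log x))
    (hlogl : |log l| ≤ log (log x)) {k : ℕ} (hk : (k : ℝ) ≤ log x / (100 * log (log x))) :
    -(log x / 50) - l ≤ log (poissonProb l k) := by
  set L := log (log x)
  have hlogx : 0 ≤ log x := log_nonneg hx
  have hkL : (k : ℝ) * L ≤ log x / 100 := by
    rwa [le_div_iff₀ (by positivity), ← mul_assoc, mul_comm _ (100 : ℝ), mul_assoc,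
      ← le_div_iff₀' (by norm_num)] at hk
  have hk_log : (k : ℝ) ≤ log x :=
    hk.trans (div_le_self hlogx (by linarith))
  have hfact : log k.factorial ≤ k * L := by
    refine (log_factorial_le_mul_log k).trans (mul_le_mul_of_nonneg_left ?_ k.cast_nonneg)
    rcases k.eq_zero_or_pos with rfl | hk0
    · simpa using (zero_le_one.trans hL)
    · exact log_le_log (mod_cast hk0) hk_log
  have hlog_l : (k : ℝ) * -L ≤ k * log l :=
    mul_le_mul_of_nonneg_left (by linarith [neg_abs_le (log l)]) k.cast_nonneg
  rw [log_poissonProb hl]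
  linarith

/-- Fix `λ > 0` and set `μ_k = λ^k e^{−λ}/k!`. There exists `M` such that for all
integers `m ≥ M` and all `k` with `0 ≤ k ≤ log m / (100 log log m)`, the collision
probability of two independent Poisson(`m·μ_k`) variables, namely
`∑_{j} ((m μ_k)^j e^{−m μ_k}/j!)²`, is at most `m^{−1/100}`. -/
theorem stmt_4 (l : ℝ) (hl : 0 < l) :
    ∃ M : ℕ, ∀ m : ℕ, M ≤ m → ∀ k : ℕ,
      (k : ℝ) ≤ Real.log m / (100 * Real.log (Real.log m)) →
      (∑' j : ℕ,
          (((m : ℝ) * (l ^ k * Real.exp (-l) / (Nat.factorial k))) ^ j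
              * Real.exp (-((m : ℝ) * (l ^ k * Real.exp (-l) / (Nat.factorial k))))
              / (Nat.factorial j)) ^ 2)
        ≤ (m : ℝ) ^ (-(1 / 100 : ℝ)) := by
  have hlog : Tendsto (fun m : ℕ ↦ log m) atTop atTop :=
    tendsto_log_atTop.comp tendsto_natCast_atTop_atTop
  obtain ⟨M, hM⟩ := eventually_atTop.mp <| (eventually_ge_atTop 1).and <|
    ((tendsto_log_atTop.comp hlog).eventually_ge_atTop (max 1 |log l|)).and
      (hlog.eventually_ge_atTop (50 * (8 + l)))
  refine ⟨M, fun m hm k hk ↦ ?_⟩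
  obtain ⟨hm_one, hL, hlogm⟩ := hM m hm
  have hm1 : (1 : ℝ) ≤ m := mod_cast hm_one
  have hμk_pos : 0 < poissonProb l k := poissonProb_pos hl k
  set μ := (m : ℝ) * poissonProb l k
  have hμ_pos : 0 < μ := mul_pos (by linarith) hμk_pos
  have hlogμ : 98 / 100 * log m - l ≤ log μ := by
    have := le_log_poissonProb hl hm1 (le_of_max_le_left hL) (le_of_max_le_right hL) hk
    rw [log_mul (by positivity) hμk_pos.ne']
    linarith
  have hμ : 1 ≤ μ := by
    rw [← log_nonneg_iff hμ_pos]; linarith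
  calc ∑' j, poissonProb μ j ^ 2 ≤ exp 4 / √μ := tsum_poissonProb_sq_le hμ
    _ = exp (4 - log μ / 2) := by
      rw [sqrt_eq_rpow, rpow_def_of_pos hμ_pos, ← exp_sub]; ring_nf
    _ ≤ exp (log m * -(1 / 100)) := exp_le_exp.mpr (by linarith)
    _ = (m : ℝ) ^ (-(1 / 100 : ℝ)) := (rpow_def_of_pos (by linarith) _).symm
end

section
/- Fix λ > 1 and let (Z_ℓ)_{ℓ≥0} be a Galton–Watson process with Poisson(λ) offspring distribution. Then for every integer m ≥ 1 there is a constant C_{m,λ} > 0 such that E[Z_ℓ^m] ≤ C_{m,λ} · λ^{ℓ m} for all integers ℓ ≥ 1. -/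
/-!
Conditionally on `Z ℓ = n`, `Z (ℓ + 1)` is a sum of `n` independent Poisson(λ) variables, hence
Poisson(nλ). Expanding `k ^ m` in falling factorials (Stirling numbers `S(m, j)` of the second
kind), the `m`-th moment of Poisson(μ) is `∑ j, S(m, j) μ ^ j ≤ μ ^ m + B_m μ ^ (m - 1)` whenever
`μ = 0` or `μ ≥ 1`, where `B_m = ∑_{j < m} S(m, j)`. Hence
`E[Z_{ℓ+1}^m] ≤ λ^m E[Z_ℓ^m] + B_m λ^(m-1) E[Z_ℓ^(m-1)]`, and by induction on `m` the normalised
moment `E[Z_ℓ^m] / λ^(ℓm)` increases by at most `B_m C_{m-1} λ^(-(ℓ+1))` per generation, a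
summable geometric sequence.
-/

open Finset MeasureTheory ProbabilityTheory
open scoped ENNReal NNReal

namespace Nat

theorem mul_descFactorial_eq_add (k j : ℕ) :
    k * k.descFactorial j = k.descFactorial (j + 1) + j * k.descFactorial j := by
  rw [descFactorial_succ]
  rcases le_or_gt j k with h | h
  · rw [← add_mul, Nat.sub_add_cancel h]
  · simp [descFactorial_eq_zero_iff_lt.2 h]

theorem pow_eq_sum_stirlingSecond_mul_descFactorial (k m : ℕ) :
    k ^ m = ∑ j ∈ range (m + 1), stirlingSecond m j * k.descFactorial j := by
  induction m with
  | zero => simp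
  | succ m ih =>
    have hshift : ∑ j ∈ range (m + 1), j * stirlingSecond m j * k.descFactorial j =
        ∑ j ∈ range (m + 1), (j + 1) * stirlingSecond m (j + 1) * k.descFactorial (j + 1) := by
      rw [sum_range_succ', sum_range_succ, stirlingSecond_eq_zero_of_lt (lt_add_one m)]
      simp
    calc k ^ (m + 1) = ∑ j ∈ range (m + 1), stirlingSecond m j * (k * k.descFactorial j) := by
          rw [pow_succ, ih, sum_mul]
          exact sum_congr rfl fun j _ => by ring
      _ = ∑ j ∈ range (m + 1), stirlingSecond m j * k.descFactorial (j + 1) +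
          ∑ j ∈ range (m + 1), j * stirlingSecond m j * k.descFactorial j := by
          rw [← sum_add_distrib]
          exact sum_congr rfl fun j _ => by rw [mul_descFactorial_eq_add]; ring
      _ = ∑ j ∈ range (m + 2), stirlingSecond (m + 1) j * k.descFactorial j := by
          rw [hshift, sum_range_succ' _ (m + 1), ← sum_add_distrib]
          simp only [stirlingSecond_succ_succ, stirlingSecond_succ_zero, zero_mul, add_zero]
          exact sum_congr rfl fun j _ => by ring

end Nat

lemma le_mul_pow_of_le_pow_mul_add {a : ℕ → ℝ≥0∞} {L c : ℝ≥0} (hL : 1 < L) {k : ℕ}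
    (h0 : a 0 ≤ 1) (hstep : ∀ ℓ, a (ℓ + 1) ≤ L ^ (k + 1) * a ℓ + c * L ^ ((ℓ + 1) * k))
    (ℓ : ℕ) : a ℓ ≤ ((1 + c * ∑' j : ℕ, L⁻¹ ^ (j + 1)) * L ^ (ℓ * (k + 1)) : ℝ≥0) := by
  have hpartial (ℓ : ℕ) :
      a ℓ ≤ ((1 + c * ∑ j ∈ range ℓ, L⁻¹ ^ (j + 1)) * L ^ (ℓ * (k + 1)) : ℝ≥0) := by
    induction ℓ with
    | zero => simpa using h0
    | succ ℓ ih =>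
      have hcancel : L⁻¹ ^ (ℓ + 1) * L ^ ((ℓ + 1) * (k + 1)) = L ^ ((ℓ + 1) * k) := by
        rw [mul_add_one (ℓ + 1) k, pow_add L ((ℓ + 1) * k), mul_left_comm, ← mul_pow,
          inv_mul_cancel₀ (by positivity), one_pow, mul_one]
      have hid : L ^ (k + 1) * ((1 + c * ∑ j ∈ range ℓ, L⁻¹ ^ (j + 1)) * L ^ (ℓ * (k + 1))) +
          c * L ^ ((ℓ + 1) * k) =
          (1 + c * ∑ j ∈ range (ℓ + 1), L⁻¹ ^ (j + 1)) * L ^ ((ℓ + 1) * (k + 1)) := by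
        rw [sum_range_succ, ← hcancel]
        ring
      calc a (ℓ + 1) ≤ L ^ (k + 1) * a ℓ + c * L ^ ((ℓ + 1) * k) := hstep ℓ
        _ ≤ (L : ℝ≥0∞) ^ (k + 1) *
              ↑((1 + c * ∑ j ∈ range ℓ, L⁻¹ ^ (j + 1)) * L ^ (ℓ * (k + 1))) +
            c * L ^ ((ℓ + 1) * k) := by gcongr
        _ = _ := by exact_mod_cast congrArg ((↑) : ℝ≥0 → ℝ≥0∞) hid
  have hsum : Summable fun j : ℕ => L⁻¹ ^ (j + 1) :=
    (NNReal.summable_nat_add_iff 1).2 (NNReal.summable_geometric (inv_lt_one_of_one_lt₀ hL))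
  refine (hpartial ℓ).trans ?_
  gcongr
  exact hsum.sum_le_tsum _ fun _ _ => zero_le

section RandomIndex

variable {Ω : Type*} {mΩ : MeasurableSpace Ω} {P : Measure Ω}

lemma measurable_comp_index {β : Type*} [MeasurableSpace β] {N : Ω → ℕ} {F : ℕ → Ω → β}
    (hN : Measurable N) (hF : ∀ n, Measurable (F n)) : Measurable fun ω => F (N ω) ω :=
  (measurable_from_prod_countable_left (f := fun p : Ω × ℕ => F p.2 p.1) hF).comp
    (measurable_id.prodMk hN)

lemma lintegral_comp_eq_tsum {N : Ω → ℕ} (hN : Measurable N) (g : ℕ → ℝ≥0∞) :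
    ∫⁻ ω, g (N ω) ∂P = ∑' n, P (N ⁻¹' {n}) * g n := by
  rw [← lintegral_map Measurable.of_discrete hN, lintegral_countable']
  exact tsum_congr fun n => by rw [Measure.map_apply hN (measurableSet_singleton n), mul_comm]

lemma lintegral_comp_index_eq_tsum {N : Ω → ℕ} {F : ℕ → Ω → ℝ≥0∞} (hN : Measurable N)
    (hF : ∀ n, Measurable (F n)) (hNF : ∀ n, IndepFun N (F n) P) :
    ∫⁻ ω, F (N ω) ω ∂P = ∑' n, P (N ⁻¹' {n}) * ∫⁻ ω, F n ω ∂P := by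
  have hfib (n : ℕ) : MeasurableSet (N ⁻¹' {n}) := hN (measurableSet_singleton n)
  have hsplit (ω : Ω) : F (N ω) ω = ∑' n, (N ⁻¹' {n}).indicator (F n) ω := by
    rw [tsum_eq_single (N ω) fun n hn => Set.indicator_of_notMem (by simpa [eq_comm] using hn) _]
    simp
  rw [lintegral_congr hsplit, lintegral_tsum fun n => ((hF n).indicator (hfib n)).aemeasurable]
  refine tsum_congr fun n => ?_
  let g : ℕ → ℝ≥0∞ := ({n} : Set ℕ).indicator 1
  have hind : IndepFun (g ∘ N) (F n) P := (hNF n).comp Measurable.of_discrete measurable_id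
  calc ∫⁻ ω, (N ⁻¹' {n}).indicator (F n) ω ∂P
      = ∫⁻ ω, (g ∘ N * F n) ω ∂P :=
        lintegral_congr fun ω => by by_cases h : N ω = n <;> simp [g, h]
    _ = P (N ⁻¹' {n}) * ∫⁻ ω, F n ω ∂P := by
        rw [lintegral_mul_eq_lintegral_mul_lintegral_of_indepFun (Measurable.of_discrete.comp hN)
          (hF n) hind, ← lintegral_indicator_one (hfib n)]
        rfl

lemma lintegral_comp_index {N : Ω → ℕ} {F : ℕ → Ω → ℝ≥0∞} (hN : Measurable N)
    (hF : ∀ n, Measurable (F n)) (hNF : ∀ n, IndepFun N (F n) P) :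
    ∫⁻ ω, F (N ω) ω ∂P = ∫⁻ ω, ∫⁻ ω', F (N ω) ω' ∂P ∂P := by
  rw [lintegral_comp_index_eq_tsum hN hF hNF, lintegral_comp_eq_tsum hN fun n => ∫⁻ ω', F n ω' ∂P]

end RandomIndex

namespace ProbabilityTheory

variable {Ω : Type*} {mΩ : MeasurableSpace Ω} {P : Measure Ω}

lemma poissonMeasure_zero : poissonMeasure 0 = Measure.dirac 0 := by
  refine Measure.ext_of_singleton fun n => ?_
  rw [poissonMeasure_singleton]
  rcases n with _ | n <;> simp

lemma lintegral_descFactorial_poissonMeasure (r : ℝ≥0) (j : ℕ) :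
    ∫⁻ k, (k.descFactorial j : ℝ≥0∞) ∂poissonMeasure r = r ^ j := by
  have hterm (i : ℕ) : ((i + j).descFactorial j : ℝ≥0∞) * poissonMeasure r {i + j} =
      r ^ j * poissonMeasure r {i} := by
    have hfac := Nat.factorial_mul_descFactorial (Nat.le_add_left j i)
    rw [Nat.add_sub_cancel] at hfac
    simp only [poissonMeasure_singleton]
    rw [← ENNReal.ofReal_natCast, ← ENNReal.ofReal_coe_nnreal, ← ENNReal.ofReal_pow r.coe_nonneg,
      ← ENNReal.ofReal_mul (by positivity), ← ENNReal.ofReal_mul (by positivity)]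
    congr 1
    rw [← hfac]
    push_cast
    field_simp
    ring
  have hmass : ∑' i, poissonMeasure r {i} = 1 := by
    simpa using (lintegral_countable' (μ := poissonMeasure r) 1).symm
  rw [lintegral_countable', ← ENNReal.summable.sum_add_tsum_nat_add' (k := j),
    sum_eq_zero fun k hk => by simp [Nat.descFactorial_eq_zero_iff_lt.2 (mem_range.1 hk)],
    zero_add, tsum_congr hterm, ENNReal.tsum_mul_left, hmass, mul_one]

lemma lintegral_pow_poissonMeasure (r : ℝ≥0) (m : ℕ) :
    ∫⁻ k, (k : ℝ≥0∞) ^ m ∂poissonMeasure r =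
      ∑ j ∈ range (m + 1), (Nat.stirlingSecond m j : ℝ≥0∞) * r ^ j := by
  simp_rw [← Nat.cast_pow, Nat.pow_eq_sum_stirlingSecond_mul_descFactorial, Nat.cast_sum,
    Nat.cast_mul]
  rw [lintegral_finsetSum _ fun j _ => Measurable.of_discrete]
  simp_rw [lintegral_const_mul _ Measurable.of_discrete, lintegral_descFactorial_poissonMeasure]

lemma lintegral_pow_succ_poissonMeasure_le {r : ℝ≥0} (hr : r = 0 ∨ 1 ≤ r) (m : ℕ) :
    ∫⁻ k, (k : ℝ≥0∞) ^ (m + 1) ∂poissonMeasure r ≤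
      r ^ (m + 1) + (∑ j ∈ range (m + 1), Nat.stirlingSecond (m + 1) j : ℕ) * r ^ m := by
  rw [lintegral_pow_poissonMeasure, sum_range_succ, Nat.stirlingSecond_self, Nat.cast_one,
    one_mul, add_comm, Nat.cast_sum, sum_mul]
  gcongr _ + ?_
  refine sum_le_sum fun j hj => ?_
  rcases j with _ | j
  · simp
  have hjm : j + 1 ≤ m := by simpa using hj
  rcases hr with rfl | hr
  · simp
  · gcongr
    exact_mod_cast hr

lemma iIndepFun.indep_iSup_comap {ι β : Type*} {mβ : MeasurableSpace β} {f : ι → Ω → β}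
    (hf : ∀ i, Measurable (f i)) (h : iIndepFun f P) {S T : Set ι} (hST : Disjoint S T) :
    Indep (⨆ i ∈ S, mβ.comap (f i)) (⨆ i ∈ T, mβ.comap (f i)) P :=
  indep_iSup_of_disjoint (fun i => (hf i).comap_le) h.iIndep hST

lemma hasLaw_poissonMeasure_of_measure_eq {X : Ω → ℕ} (hX : Measurable X) {l : ℝ} (hl : 0 ≤ l)
    (h : ∀ k, P {ω | X ω = k} = ENNReal.ofReal (l ^ k * Real.exp (-l) / k.factorial)) :
    HasLaw X (poissonMeasure l.toNNReal) P where
  aemeasurable := hX.aemeasurable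
  map_eq := Measure.ext_of_singleton fun k => by
    rw [Measure.map_apply hX (measurableSet_singleton k), poissonMeasure_singleton,
      Real.coe_toNNReal l hl, mul_comm (Real.exp _)]
    exact h k

lemma iIndepFun.hasLaw_sum_range_poissonMeasure [IsProbabilityMeasure P] {X : ℕ → Ω → ℕ}
    {r : ℝ≥0} (hX : ∀ i, Measurable (X i)) (h : iIndepFun X P)
    (hlaw : ∀ i, HasLaw (X i) (poissonMeasure r) P) (n : ℕ) :
    HasLaw (∑ i ∈ range n, X i) (poissonMeasure (n * r)) P := by
  induction n with
  | zero =>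
    simpa [poissonMeasure_zero] using hasLaw_dirac_of_ae_eq (P := P) (X := (0 : Ω → ℕ))
      (ae_of_all _ fun _ => rfl)
  | succ n ih =>
    rw [sum_range_succ, Nat.cast_succ, add_one_mul]
    exact (h.indepFun_finsetSum_of_notMem hX notMem_range_self).hasLaw_add_poissonMeasure ih
      (hlaw n)

end ProbabilityTheory

section GaltonWatson

variable {Ω : Type*} {mΩ : MeasurableSpace Ω} {P : Measure Ω} {r : ℝ≥0}
  {ξ : ℕ → ℕ → Ω → ℕ} {Z : ℕ → Ω → ℕ}

/-- `ξ ℓ i` is the number of children of the `i`-th individual of generation `ℓ`. -/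
structure IsPoissonGaltonWatson (P : Measure Ω) (r : ℝ≥0) (ξ : ℕ → ℕ → Ω → ℕ)
    (Z : ℕ → Ω → ℕ) : Prop where
  measurable_offspring : ∀ ℓ i, Measurable (ξ ℓ i)
  iIndepFun_offspring : iIndepFun (fun q : ℕ × ℕ => ξ q.1 q.2) P
  hasLaw_offspring : ∀ ℓ i, HasLaw (ξ ℓ i) (poissonMeasure r) P
  zero : ∀ ω, Z 0 ω = 1
  succ : ∀ ℓ ω, Z (ℓ + 1) ω = ∑ i ∈ range (Z ℓ ω), ξ ℓ i ω

abbrev generationsBefore (ξ : ℕ → ℕ → Ω → ℕ) (ℓ : ℕ) : MeasurableSpace Ω :=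
  ⨆ q ∈ {q : ℕ × ℕ | q.1 < ℓ}, MeasurableSpace.comap (ξ q.1 q.2) inferInstance

lemma generationsBefore_le (hξ : ∀ ℓ i, Measurable (ξ ℓ i)) (ℓ : ℕ) :
    generationsBefore ξ ℓ ≤ mΩ :=
  iSup₂_le fun q _ => (hξ q.1 q.2).comap_le

lemma measurable_generationsBefore (hZ0 : ∀ ω, Z 0 ω = 1)
    (hZ : ∀ ℓ ω, Z (ℓ + 1) ω = ∑ i ∈ range (Z ℓ ω), ξ ℓ i ω) (ℓ : ℕ) :
    Measurable[generationsBefore ξ ℓ] (Z ℓ) := by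
  induction ℓ with
  | zero =>
    rw [show Z 0 = fun _ => 1 from funext hZ0]
    exact measurable_const
  | succ ℓ ih =>
    have hmono : generationsBefore ξ ℓ ≤ generationsBefore ξ (ℓ + 1) :=
      biSup_mono fun q (hq : q.1 < ℓ) => Nat.lt_succ_of_lt hq
    have hrow (i : ℕ) : Measurable[generationsBefore ξ (ℓ + 1)] (ξ ℓ i) :=
      Measurable.of_comap_le (le_iSup₂ (f := fun q (_ : q ∈ {q : ℕ × ℕ | q.1 < ℓ + 1}) =>
        MeasurableSpace.comap (ξ q.1 q.2) inferInstance) (ℓ, i) (Nat.lt_succ_self ℓ))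
    rw [show Z (ℓ + 1) = fun ω => ∑ i ∈ range (Z ℓ ω), ξ ℓ i ω from funext (hZ ℓ)]
    exact measurable_comp_index (mΩ := generationsBefore ξ (ℓ + 1)) (ih.mono hmono le_rfl)
      fun n => Finset.measurable_sum _ fun i _ => hrow i

lemma indepFun_generation_sum_offspring (hξ : ∀ ℓ i, Measurable (ξ ℓ i))
    (hindep : iIndepFun (fun q : ℕ × ℕ => ξ q.1 q.2) P) (hZ0 : ∀ ω, Z 0 ω = 1)
    (hZ : ∀ ℓ ω, Z (ℓ + 1) ω = ∑ i ∈ range (Z ℓ ω), ξ ℓ i ω) (ℓ n : ℕ) :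
    IndepFun (Z ℓ) (fun ω => ∑ i ∈ range n, ξ ℓ i ω) P := by
  have hdisj : Disjoint {q : ℕ × ℕ | q.1 < ℓ} {q | q.1 = ℓ} :=
    Set.disjoint_left.2 fun q (hlt : q.1 < ℓ) (heq : q.1 = ℓ) => hlt.ne heq
  have hrow (i : ℕ) : Measurable[⨆ q ∈ {q : ℕ × ℕ | q.1 = ℓ},
      MeasurableSpace.comap (ξ q.1 q.2) inferInstance] (ξ ℓ i) :=
    Measurable.of_comap_le (le_iSup₂ (f := fun q (_ : q ∈ {q : ℕ × ℕ | q.1 = ℓ}) =>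
      MeasurableSpace.comap (ξ q.1 q.2) inferInstance) (ℓ, i) rfl)
  have hind := hindep.indep_iSup_comap (fun q => hξ q.1 q.2) hdisj
  have hpast := (measurable_generationsBefore hZ0 hZ ℓ).comap_le
  have hsum := (Finset.measurable_sum (range n) fun i _ => hrow i).comap_le
  rw [IndepFun_iff_Indep]
  exact indep_of_indep_of_le_right (indep_of_indep_of_le_left hind hpast) hsum

namespace IsPoissonGaltonWatson

lemma measurable (h : IsPoissonGaltonWatson P r ξ Z) (ℓ : ℕ) : Measurable (Z ℓ) :=
  (measurable_generationsBefore h.zero h.succ ℓ).mono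
    (generationsBefore_le h.measurable_offspring ℓ) le_rfl

lemma lintegral_succ [IsProbabilityMeasure P] (h : IsPoissonGaltonWatson P r ξ Z)
    (f : ℕ → ℝ≥0∞) (ℓ : ℕ) :
    ∫⁻ ω, f (Z (ℓ + 1) ω) ∂P = ∫⁻ ω, ∫⁻ k, f k ∂poissonMeasure (Z ℓ ω * r) ∂P := by
  have hrow (n : ℕ) : HasLaw (fun ω => ∑ i ∈ range n, ξ ℓ i ω) (poissonMeasure (n * r)) P := by
    simpa only [Finset.sum_fn] using
      (h.iIndepFun_offspring.precomp (Prod.mk_right_injective ℓ)).hasLaw_sum_range_poissonMeasure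
        (h.measurable_offspring ℓ) (h.hasLaw_offspring ℓ) n
  simp_rw [h.succ]
  rw [lintegral_comp_index (F := fun n ω => f (∑ i ∈ range n, ξ ℓ i ω)) (h.measurable ℓ)
    (fun n => Measurable.of_discrete.comp
      (Finset.measurable_sum _ fun i _ => h.measurable_offspring ℓ i))
    (fun n => (indepFun_generation_sum_offspring h.measurable_offspring
      h.iIndepFun_offspring h.zero h.succ ℓ n).comp measurable_id Measurable.of_discrete)]
  exact lintegral_congr fun ω => (hrow (Z ℓ ω)).lintegral_comp Measurable.of_discrete.aemeasurable

lemma lintegral_pow_succ_le [IsProbabilityMeasure P] (h : IsPoissonGaltonWatson P r ξ Z)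
    (hr : 1 ≤ r) (m ℓ : ℕ) :
    ∫⁻ ω, (Z (ℓ + 1) ω : ℝ≥0∞) ^ (m + 1) ∂P ≤
      r ^ (m + 1) * ∫⁻ ω, (Z ℓ ω : ℝ≥0∞) ^ (m + 1) ∂P +
        (∑ j ∈ range (m + 1), Nat.stirlingSecond (m + 1) j : ℕ) * r ^ m *
          ∫⁻ ω, (Z ℓ ω : ℝ≥0∞) ^ m ∂P := by
  have hrate (ω : Ω) : (Z ℓ ω * r : ℝ≥0) = 0 ∨ 1 ≤ (Z ℓ ω * r : ℝ≥0) := by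
    rcases Nat.eq_zero_or_pos (Z ℓ ω) with hZ | hZ
    · simp [hZ]
    · exact Or.inr (one_le_mul (Nat.one_le_cast.2 hZ) hr)
  have hZ := h.measurable ℓ
  calc ∫⁻ ω, (Z (ℓ + 1) ω : ℝ≥0∞) ^ (m + 1) ∂P
      = ∫⁻ ω, ∫⁻ k, (k : ℝ≥0∞) ^ (m + 1) ∂poissonMeasure (Z ℓ ω * r) ∂P :=
        h.lintegral_succ (fun k => (k : ℝ≥0∞) ^ (m + 1)) ℓ
    _ ≤ ∫⁻ ω, r ^ (m + 1) * (Z ℓ ω : ℝ≥0∞) ^ (m + 1) +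
          (∑ j ∈ range (m + 1), Nat.stirlingSecond (m + 1) j : ℕ) * r ^ m *
            (Z ℓ ω : ℝ≥0∞) ^ m ∂P :=
        lintegral_mono fun ω => (lintegral_pow_succ_poissonMeasure_le (hrate ω) m).trans_eq
          (by push_cast; ring)
    _ = _ := by
        rw [lintegral_add_left (by fun_prop), lintegral_const_mul _ (by fun_prop),
          lintegral_const_mul _ (by fun_prop)]

end IsPoissonGaltonWatson

noncomputable def galtonWatsonMomentBound (r : ℝ≥0) : ℕ → ℝ≥0
  | 0 => 1
  | m + 1 => 1 + (∑ j ∈ range (m + 1), Nat.stirlingSecond (m + 1) j : ℕ) *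
      galtonWatsonMomentBound r m * ∑' j : ℕ, r⁻¹ ^ (j + 1)

lemma galtonWatsonMomentBound_pos (r : ℝ≥0) (m : ℕ) : 0 < galtonWatsonMomentBound r m := by
  cases m <;> unfold galtonWatsonMomentBound <;> positivity

lemma IsPoissonGaltonWatson.lintegral_pow_le [IsProbabilityMeasure P]
    (h : IsPoissonGaltonWatson P r ξ Z) (hr : 1 < r) (m ℓ : ℕ) :
    ∫⁻ ω, (Z ℓ ω : ℝ≥0∞) ^ m ∂P ≤ (galtonWatsonMomentBound r m * r ^ (ℓ * m) : ℝ≥0) := by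
  induction m generalizing ℓ with
  | zero => simp [galtonWatsonMomentBound]
  | succ m ih =>
    refine le_mul_pow_of_le_pow_mul_add (a := fun ℓ => ∫⁻ ω, (Z ℓ ω : ℝ≥0∞) ^ (m + 1) ∂P) hr
      (by simp [h.zero]) (fun ℓ => (h.lintegral_pow_succ_le hr.le m ℓ).trans ?_) ℓ
    calc _ ≤ (r : ℝ≥0∞) ^ (m + 1) * ∫⁻ ω, (Z ℓ ω : ℝ≥0∞) ^ (m + 1) ∂P +
            (∑ j ∈ range (m + 1), Nat.stirlingSecond (m + 1) j : ℕ) * r ^ m *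
              ↑(galtonWatsonMomentBound r m * r ^ (ℓ * m)) := by gcongr; exact ih ℓ
      _ = _ := by push_cast; ring

end GaltonWatson

theorem stmt_6_general (l : ℝ) (hl : 1 < l) (m : ℕ) :
    ∃ C : ℝ, 0 < C ∧
      ∀ (Ω : Type) (_ : MeasurableSpace Ω) (P : Measure Ω), IsProbabilityMeasure P →
      ∀ (ξ : ℕ → ℕ → Ω → ℕ) (Z : ℕ → Ω → ℕ),
        (∀ ℓ i, Measurable (ξ ℓ i)) →
        iIndepFun (fun q : ℕ × ℕ => ξ q.1 q.2) P →
        (∀ ℓ i k, P {ω | ξ ℓ i ω = k}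
            = ENNReal.ofReal (l ^ k * Real.exp (-l) / (Nat.factorial k))) →
        (∀ ω, Z 0 ω = 1) →
        (∀ ℓ ω, Z (ℓ + 1) ω = ∑ i ∈ Finset.range (Z ℓ ω), ξ ℓ i ω) →
        ∀ ℓ : ℕ, 1 ≤ ℓ →
          ∫⁻ ω, ((Z ℓ ω : ℝ≥0∞)) ^ m ∂P ≤ ENNReal.ofReal (C * l ^ (ℓ * m)) := by
  have hl0 : 0 ≤ l := by linarith
  refine ⟨galtonWatsonMomentBound l.toNNReal m, galtonWatsonMomentBound_pos _ m, ?_⟩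
  intro Ω _ P _ ξ Z hξ hindep hpois hZ0 hZ ℓ _
  have hGW : IsPoissonGaltonWatson P l.toNNReal ξ Z :=
    ⟨hξ, hindep, fun ℓ i => hasLaw_poissonMeasure_of_measure_eq (hξ ℓ i) hl0 (hpois ℓ i), hZ0, hZ⟩
  refine (hGW.lintegral_pow_le (Real.one_lt_toNNReal.2 hl) m ℓ).trans_eq ?_
  rw [← ENNReal.ofReal_coe_nnreal, NNReal.coe_mul, NNReal.coe_pow, Real.coe_toNNReal l hl0]

/-- Fix `λ > 1` and let `(Z_ℓ)` be a Galton–Watson process with Poisson(λ) offspring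
distribution, built from an i.i.d. array `ξ` via `Z₀ = 1`, `Z_{ℓ+1} = ∑_{i < Z_ℓ} ξ_{ℓ,i}`.
Then for every `m ≥ 1` there is a constant `C_{m,λ} > 0` such that
`E[Z_ℓ^m] ≤ C_{m,λ} · λ^{ℓ m}` for all `ℓ ≥ 1`. -/
theorem stmt_6 (l : ℝ) (hl : 1 < l) (m : ℕ) (hm : 1 ≤ m) :
    ∃ C : ℝ, 0 < C ∧
      ∀ (Ω : Type) (_ : MeasurableSpace Ω) (P : Measure Ω), IsProbabilityMeasure P →
      ∀ (ξ : ℕ → ℕ → Ω → ℕ) (Z : ℕ → Ω → ℕ),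
        (∀ ℓ i, Measurable (ξ ℓ i)) →
        iIndepFun (fun q : ℕ × ℕ => ξ q.1 q.2) P →
        (∀ ℓ i k, P {ω | ξ ℓ i ω = k}
            = ENNReal.ofReal (l ^ k * Real.exp (-l) / (Nat.factorial k))) →
        (∀ ω, Z 0 ω = 1) →
        (∀ ℓ ω, Z (ℓ + 1) ω = ∑ i ∈ Finset.range (Z ℓ ω), ξ ℓ i ω) →
        ∀ ℓ : ℕ, 1 ≤ ℓ →
          ∫⁻ ω, ((Z ℓ ω : ℝ≥0∞)) ^ m ∂P ≤ ENNReal.ofReal (C * l ^ (ℓ * m)) :=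
  stmt_6_general l hl m
end

section
/- Fix λ ≥ 1 and let (Z_ℓ)_{ℓ≥0} be a Galton–Watson process with Poisson(λ) offspring distribution. Then for every real θ > log λ, the quantity (1/r) · log P(∑_{ℓ=0}^{r} Z_ℓ > e^{θ r}) tends to −∞ as r → ∞; i.e., for every M > 0 there exists R such that for all r ≥ R, P(∑_{ℓ=0}^{r} Z_ℓ > e^{θ r}) ≤ e^{−M r}. -/
/-! Exponential Chebyshev bound for `S_r = ∑_{ℓ ≤ r} Z_ℓ`. Conditioning on the first `r`
generations and using the Poisson transform `E e^{u ξ} = e^{λ (e^u - 1)}` gives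
`E exp (t ∑_{ℓ < r} Z_ℓ + u Z_r) = exp (φ_t^[r] u)` with `φ_t u = t + λ (e^u - 1)`, hence
`E e^{t S_r} = exp (φ_t^[r] t)`. On `[0, ε]` we have `φ_t u ≤ t + K u` with `K = λ e^ε`,
so for `t = ε / ((r + 1) K^r)` all iterates stay below `ε`. Taking `ε = (θ - log λ) / 2`, so
that `e^{θ r} = K^r e^{ε r}`, the Chernoff bound becomes
`P(S_r > e^{θ r}) ≤ exp (ε - ε e^{ε r} / (r + 1))`, which decays faster than any exponential.
-/

open MeasureTheory ProbabilityTheory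
open scoped ENNReal

namespace GaltonWatson

open Real Finset Filter

variable {Ω : Type*}

theorem measure_lt_le_exp_neg_mul_mul_lintegral_exp [MeasurableSpace Ω] {μ : Measure Ω}
    {S : Ω → ℝ} (hS : Measurable S) {t : ℝ} (ht : 0 ≤ t) (a : ℝ) :
    μ {ω | a < S ω}
      ≤ ENNReal.ofReal (exp (-(t * a))) * ∫⁻ ω, ENNReal.ofReal (exp (t * S ω)) ∂μ := by
  rw [← lintegral_const_mul' _ _ ENNReal.ofReal_ne_top,
    ← lintegral_indicator_one (measurableSet_lt measurable_const hS)]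
  refine lintegral_mono fun ω => ?_
  by_cases hω : a < S ω
  · rw [Set.indicator_of_mem (show ω ∈ {ω | a < S ω} from hω), Pi.one_apply,
      ← ENNReal.ofReal_mul (exp_nonneg _), ← exp_add]
    exact ENNReal.one_le_ofReal.2 (one_le_exp (by nlinarith))
  · simp [Set.indicator_of_notMem (show ω ∉ {ω | a < S ω} from hω)]

theorem lintegral_eq_tsum_setLIntegral_fiber [MeasurableSpace Ω] {μ : Measure Ω} {N : Ω → ℕ}
    (hN : Measurable N) (f : Ω → ℝ≥0∞) :
    ∫⁻ ω, f ω ∂μ = ∑' m, ∫⁻ ω in {ω | N ω = m}, f ω ∂μ := by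
  change _ = ∑' m, ∫⁻ ω in N ⁻¹' {m}, f ω ∂μ
  rw [← lintegral_iUnion (fun m => hN (measurableSet_singleton m))]
  · rw [← Set.preimage_iUnion, Set.iUnion_of_singleton, Set.preimage_univ, Measure.restrict_univ]
  · exact fun m n hmn => Set.disjoint_left.2 fun ω hm hn => hmn (hm.symm.trans hn)

theorem lintegral_exp_mul_of_poisson [MeasurableSpace Ω] {P : Measure Ω} {N : Ω → ℕ}
    (hN : Measurable N) {l : ℝ} (hl : 0 ≤ l)
    (hlaw : ∀ k, P {ω | N ω = k} = ENNReal.ofReal (l ^ k * exp (-l) / k.factorial)) (u : ℝ) :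
    ∫⁻ ω, ENNReal.ofReal (exp (u * N ω)) ∂P = ENNReal.ofReal (exp (l * (exp u - 1))) := by
  have hterm : ∀ k : ℕ, ENNReal.ofReal (exp (u * k)) * P.map N {k}
      = ENNReal.ofReal ((l * exp u) ^ k / k.factorial * exp (-l)) := fun k => by
    have hk : P (N ⁻¹' {k}) = _ := hlaw k
    rw [Measure.map_apply hN (measurableSet_singleton k), hk,
      ← ENNReal.ofReal_mul (exp_nonneg _), mul_comm u, exp_nat_mul, mul_pow]
    ring_nf
  rw [← lintegral_map (f := fun k : ℕ => ENNReal.ofReal (exp (u * k)))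
    (measurable_of_countable _) hN, lintegral_countable']
  simp_rw [hterm]
  rw [← ENNReal.ofReal_tsum_of_nonneg (fun k => by positivity)
      ((summable_pow_div_factorial _).mul_right _), tsum_mul_right,
    ← congrFun NormedSpace.exp_eq_tsum_div, ← exp_eq_exp_ℝ, ← exp_add]
  ring_nf

variable {ξ : ℕ → ℕ → Ω → ℕ}

abbrev offspringSigma (ξ : ℕ → ℕ → Ω → ℕ) (S : Set (ℕ × ℕ)) :
    MeasurableSpace Ω :=
  ⨆ q ∈ S, MeasurableSpace.comap (ξ q.1 q.2) inferInstance

theorem offspringSigma_le [MeasurableSpace Ω] (hmeas : ∀ ℓ i, Measurable (ξ ℓ i))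
    (S : Set (ℕ × ℕ)) : offspringSigma ξ S ≤ ‹MeasurableSpace Ω› :=
  iSup₂_le fun q _ => (hmeas q.1 q.2).comap_le

theorem offspringSigma_mono {S T : Set (ℕ × ℕ)} (h : S ⊆ T) :
    offspringSigma ξ S ≤ offspringSigma ξ T :=
  biSup_mono h

theorem measurable_offspringSigma {S : Set (ℕ × ℕ)} {q : ℕ × ℕ} (hq : q ∈ S) :
    Measurable[offspringSigma ξ S] (ξ q.1 q.2) :=
  Measurable.of_comap_le
    (le_biSup (fun q : ℕ × ℕ => MeasurableSpace.comap (ξ q.1 q.2) inferInstance) hq)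

theorem lintegral_mul_comp_offspring [MeasurableSpace Ω] {P : Measure Ω}
    (hmeas : ∀ ℓ i, Measurable (ξ ℓ i))
    (hind : iIndepFun (fun q : ℕ × ℕ => ξ q.1 q.2) P)
    {S : Set (ℕ × ℕ)} {q : ℕ × ℕ} (hq : q ∉ S) {X : Ω → ℝ≥0∞}
    (hX : Measurable[offspringSigma ξ S] X) (g : ℕ → ℝ≥0∞) :
    ∫⁻ ω, X ω * g (ξ q.1 q.2 ω) ∂P
      = (∫⁻ ω, X ω ∂P) * ∫⁻ ω, g (ξ q.1 q.2 ω) ∂P := by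
  have hindep : Indep (offspringSigma ξ S) (offspringSigma ξ {q}) P :=
    indep_iSup_of_disjoint
      (m := fun q : ℕ × ℕ => MeasurableSpace.comap (ξ q.1 q.2) inferInstance)
      (fun q => (hmeas q.1 q.2).comap_le) hind.iIndep (Set.disjoint_singleton_right.2 hq)
  exact lintegral_mul_eq_lintegral_mul_lintegral_of_independent_measurableSpace
    (offspringSigma_le hmeas S) (offspringSigma_le hmeas {q}) hindep
    hX ((measurable_of_countable g).comp (measurable_offspringSigma rfl))

theorem lintegral_mul_prod_offspring [MeasurableSpace Ω] {P : Measure Ω}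
    (hmeas : ∀ ℓ i, Measurable (ξ ℓ i))
    (hind : iIndepFun (fun q : ℕ × ℕ => ξ q.1 q.2) P)
    {S : Set (ℕ × ℕ)} {r : ℕ} (hS : ∀ i, (r, i) ∉ S) {X : Ω → ℝ≥0∞}
    (hX : Measurable[offspringSigma ξ S] X) (g : ℕ → ℝ≥0∞) (m : ℕ) :
    ∫⁻ ω, X ω * ∏ i ∈ range m, g (ξ r i ω) ∂P
      = (∫⁻ ω, X ω ∂P) * ∏ i ∈ range m, ∫⁻ ω, g (ξ r i ω) ∂P := by
  induction m with
  | zero => simp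
  | succ m ih =>
    set T := S ∪ {q | q.1 = r ∧ q.2 < m}
    have hXT : Measurable[offspringSigma ξ T] fun ω => X ω * ∏ i ∈ range m, g (ξ r i ω) :=
      (hX.mono (offspringSigma_mono Set.subset_union_left) le_rfl).mul
        (Finset.measurable_prod _ fun i hi => (measurable_of_countable g).comp
          (measurable_offspringSigma (q := (r, i)) (Or.inr ⟨rfl, mem_range.1 hi⟩)))
    have hrm : (r, m) ∉ T := by simp [T, hS]
    simp_rw [prod_range_succ, ← mul_assoc]
    rw [lintegral_mul_comp_offspring hmeas hind hrm hXT, ih]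

variable {Z : ℕ → Ω → ℕ}

theorem measurable_generation (hZ0 : ∀ ω, Z 0 ω = 1)
    (hZrec : ∀ ℓ ω, Z (ℓ + 1) ω = ∑ i ∈ range (Z ℓ ω), ξ ℓ i ω) (j : ℕ) :
    Measurable[offspringSigma ξ {q | q.1 < j}] (Z j) := by
  induction j with
  | zero =>
    rw [show Z 0 = fun _ => 1 from funext hZ0]
    exact measurable_const
  | succ j ih =>
    let _ : MeasurableSpace Ω := offspringSigma ξ {q | q.1 < j + 1}
    have hZj : Measurable (Z j) :=
      ih.mono (offspringSigma_mono fun q hq => Nat.lt_succ_of_lt hq) le_rfl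
    have hsum : Measurable fun p : Ω × ℕ => ∑ i ∈ range p.2, ξ j i p.1 :=
      measurable_from_prod_countable_left fun n =>
        (Finset.measurable_sum (range n) fun i _ =>
          measurable_offspringSigma (q := (j, i)) (Nat.lt_succ_self j) :
          Measurable fun ω => ∑ i ∈ range n, ξ j i ω)
    rw [show Z (j + 1) = fun ω => ∑ i ∈ range (Z j ω), ξ j i ω from funext (hZrec j)]
    exact hsum.comp (measurable_id.prodMk hZj)

theorem measurable_generation_of_le (hZ0 : ∀ ω, Z 0 ω = 1)
    (hZrec : ∀ ℓ ω, Z (ℓ + 1) ω = ∑ i ∈ range (Z ℓ ω), ξ ℓ i ω) {ℓ r : ℕ}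
    (hℓ : ℓ ≤ r) :
    Measurable[offspringSigma ξ {q | q.1 < r}] (Z ℓ) :=
  (measurable_generation hZ0 hZrec ℓ).mono
    (offspringSigma_mono fun _ hq => lt_of_lt_of_le hq hℓ) le_rfl

structure IsPoissonGaltonWatson [MeasurableSpace Ω] (P : Measure Ω) (l : ℝ)
    (ξ : ℕ → ℕ → Ω → ℕ) (Z : ℕ → Ω → ℕ) : Prop where
  measurable : ∀ ℓ i, Measurable (ξ ℓ i)
  indep : iIndepFun (fun q : ℕ × ℕ => ξ q.1 q.2) P
  poisson : ∀ ℓ i k, P {ω | ξ ℓ i ω = k} = ENNReal.ofReal (l ^ k * exp (-l) / k.factorial)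
  zero : ∀ ω, Z 0 ω = 1
  succ : ∀ ℓ ω, Z (ℓ + 1) ω = ∑ i ∈ range (Z ℓ ω), ξ ℓ i ω

noncomputable def poissonStep (l t u : ℝ) : ℝ := t + l * (exp u - 1)

namespace IsPoissonGaltonWatson

variable [MeasurableSpace Ω] {P : Measure Ω} {l : ℝ}

theorem lintegral_mul_exp_generation_succ (hGW : IsPoissonGaltonWatson P l ξ Z) (hl : 0 ≤ l)
    {r : ℕ} {F : Ω → ℝ≥0∞} (hF : Measurable[offspringSigma ξ {q | q.1 < r}] F)
    (u : ℝ) :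
    ∫⁻ ω, F ω * ENNReal.ofReal (exp (u * Z (r + 1) ω)) ∂P
      = ∫⁻ ω, F ω * ENNReal.ofReal (exp (l * (exp u - 1) * Z r ω)) ∂P := by
  have hpast := offspringSigma_le hGW.measurable {q : ℕ × ℕ | q.1 < r}
  have hZr := measurable_generation hGW.zero hGW.succ r
  rw [lintegral_eq_tsum_setLIntegral_fiber (hZr.mono hpast le_rfl),
    lintegral_eq_tsum_setLIntegral_fiber (hZr.mono hpast le_rfl)]
  refine tsum_congr fun m => ?_
  set A := {ω | Z r ω = m}
  have hA : MeasurableSet[offspringSigma ξ {q | q.1 < r}] A := hZr (measurableSet_singleton m)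
  calc ∫⁻ ω in A, F ω * ENNReal.ofReal (exp (u * Z (r + 1) ω)) ∂P
      = ∫⁻ ω, A.indicator F ω
          * ∏ i ∈ range m, ENNReal.ofReal (exp (u * ξ r i ω)) ∂P := by
        rw [← lintegral_indicator (hpast _ hA)]
        refine lintegral_congr fun ω => ?_
        by_cases hω : ω ∈ A
        · rw [Set.indicator_of_mem hω, Set.indicator_of_mem hω, hGW.succ, hω, Nat.cast_sum,
            mul_sum, exp_sum, ENNReal.ofReal_prod_of_nonneg fun _ _ => exp_nonneg _]
        · simp [Set.indicator_of_notMem hω]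
    _ = (∫⁻ ω, A.indicator F ω ∂P)
          * ∏ i ∈ range m, ∫⁻ ω, ENNReal.ofReal (exp (u * ξ r i ω)) ∂P :=
        lintegral_mul_prod_offspring hGW.measurable hGW.indep (fun _ => lt_irrefl r)
          (hF.indicator hA) (fun k : ℕ => ENNReal.ofReal (exp (u * k))) m
    _ = (∫⁻ ω in A, F ω ∂P) * ENNReal.ofReal (exp (l * (exp u - 1) * m)) := by
        rw [lintegral_indicator (hpast _ hA), prod_congr rfl fun i _ =>
            lintegral_exp_mul_of_poisson (hGW.measurable r i) hl (hGW.poisson r i) u,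
          prod_const, card_range, ← ENNReal.ofReal_pow (exp_nonneg _), ← exp_nat_mul,
          mul_comm _ (m : ℝ)]
    _ = ∫⁻ ω in A, F ω * ENNReal.ofReal (exp (l * (exp u - 1) * Z r ω)) ∂P := by
        rw [← lintegral_mul_const' _ _ ENNReal.ofReal_ne_top]
        exact setLIntegral_congr_fun (hpast _ hA) fun ω hω => by rw [hω]

theorem lintegral_exp_sum_add_mul_generation [IsProbabilityMeasure P]
    (hGW : IsPoissonGaltonWatson P l ξ Z) (hl : 0 ≤ l) (t : ℝ) (r : ℕ) (u : ℝ) :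
    ∫⁻ ω, ENNReal.ofReal (exp (t * ∑ ℓ ∈ range r, (Z ℓ ω : ℝ) + u * Z r ω)) ∂P
      = ENNReal.ofReal (exp ((poissonStep l t)^[r] u)) := by
  induction r generalizing u with
  | zero => simp [hGW.zero]
  | succ r ih =>
    have hF : Measurable[offspringSigma ξ {q | q.1 < r}]
        fun ω => ENNReal.ofReal (exp (t * ∑ ℓ ∈ range (r + 1), (Z ℓ ω : ℝ))) :=
      ENNReal.measurable_ofReal.comp (measurable_exp.comp (measurable_const.mul
        (Finset.measurable_sum _ fun ℓ hℓ =>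
          (measurable_of_countable (fun n : ℕ => (n : ℝ))).comp
            (measurable_generation_of_le hGW.zero hGW.succ
              (Nat.lt_succ_iff.1 (mem_range.1 hℓ))))))
    calc ∫⁻ ω, ENNReal.ofReal
          (exp (t * ∑ ℓ ∈ range (r + 1), (Z ℓ ω : ℝ) + u * Z (r + 1) ω)) ∂P
        = ∫⁻ ω, ENNReal.ofReal (exp (t * ∑ ℓ ∈ range (r + 1), (Z ℓ ω : ℝ)))
            * ENNReal.ofReal (exp (u * Z (r + 1) ω)) ∂P := by
          simp only [exp_add, ENNReal.ofReal_mul (exp_nonneg _)]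
      _ = ∫⁻ ω, ENNReal.ofReal (exp (t * ∑ ℓ ∈ range (r + 1), (Z ℓ ω : ℝ)))
            * ENNReal.ofReal (exp (l * (exp u - 1) * Z r ω)) ∂P :=
          hGW.lintegral_mul_exp_generation_succ hl hF u
      _ = ∫⁻ ω, ENNReal.ofReal (exp (t * ∑ ℓ ∈ range r, (Z ℓ ω : ℝ)
            + poissonStep l t u * Z r ω)) ∂P := by
          refine lintegral_congr fun ω => ?_
          rw [← ENNReal.ofReal_mul (exp_nonneg _), ← exp_add, sum_range_succ, poissonStep]
          ring_nf
      _ = ENNReal.ofReal (exp ((poissonStep l t)^[r + 1] u)) := by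
          rw [ih, Function.iterate_succ_apply]

theorem lintegral_exp_mul_sum_generations [IsProbabilityMeasure P]
    (hGW : IsPoissonGaltonWatson P l ξ Z) (hl : 0 ≤ l) (t : ℝ) (r : ℕ) :
    ∫⁻ ω, ENNReal.ofReal (exp (t * ∑ ℓ ∈ range (r + 1), (Z ℓ ω : ℝ))) ∂P
      = ENNReal.ofReal (exp ((poissonStep l t)^[r] t)) := by
  rw [← hGW.lintegral_exp_sum_add_mul_generation hl t r t]
  simp only [sum_range_succ, mul_add]

theorem measure_lt_sum_generations_le [IsProbabilityMeasure P]
    (hGW : IsPoissonGaltonWatson P l ξ Z) (hl : 0 ≤ l) {t : ℝ} (ht : 0 ≤ t) (a : ℝ)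
    (r : ℕ) :
    P {ω | a < ∑ ℓ ∈ range (r + 1), (Z ℓ ω : ℝ)}
      ≤ ENNReal.ofReal (exp ((poissonStep l t)^[r] t - t * a)) := by
  have hS : Measurable fun ω => ∑ ℓ ∈ range (r + 1), (Z ℓ ω : ℝ) :=
    Finset.measurable_sum _ fun ℓ _ => (measurable_of_countable (fun n : ℕ => (n : ℝ))).comp
      ((measurable_generation hGW.zero hGW.succ ℓ).mono (offspringSigma_le hGW.measurable _)
        le_rfl)
  calc P {ω | a < ∑ ℓ ∈ range (r + 1), (Z ℓ ω : ℝ)}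
      ≤ ENNReal.ofReal (exp (-(t * a))) *
          ∫⁻ ω, ENNReal.ofReal (exp (t * ∑ ℓ ∈ range (r + 1), (Z ℓ ω : ℝ))) ∂P :=
        measure_lt_le_exp_neg_mul_mul_lintegral_exp hS ht a
    _ = ENNReal.ofReal (exp ((poissonStep l t)^[r] t - t * a)) := by
        rw [hGW.lintegral_exp_mul_sum_generations hl,
          ← ENNReal.ofReal_mul (exp_nonneg _), ← exp_add, neg_add_eq_sub]

end IsPoissonGaltonWatson

theorem poissonStep_le {l t u ε : ℝ} (hl : 0 ≤ l) (hu : 0 ≤ u) (huε : u ≤ ε) :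
    poissonStep l t u ≤ t + l * exp ε * u := by
  have hexp : exp u - 1 ≤ u * exp ε := by
    have h := mul_le_mul_of_nonneg_right (add_one_le_exp (-u)) (exp_pos u).le
    rw [← exp_add, neg_add_cancel, exp_zero] at h
    nlinarith [exp_le_exp.2 huε]
  unfold poissonStep
  nlinarith

theorem iterate_poissonStep_le {l t ε K : ℝ} (hl : 0 ≤ l) (ht : 0 ≤ t) (hK : 1 ≤ K)
    (hlK : l * exp ε ≤ K) {r : ℕ} (hr : t * (r + 1) * K ^ r ≤ ε) :
    ∀ k ≤ r,
      0 ≤ (poissonStep l t)^[k] t ∧ (poissonStep l t)^[k] t ≤ t * (k + 1) * K ^ k := by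
  intro k
  induction k with
  | zero => simpa using ht
  | succ k ih =>
    intro hk
    obtain ⟨hv0, hv⟩ := ih (Nat.le_of_succ_le hk)
    set v := (poissonStep l t)^[k] t
    have hkr : k ≤ r := Nat.le_of_succ_le hk
    have hvε : v ≤ ε := calc
      v ≤ t * (k + 1) * K ^ k := hv
      _ ≤ t * (r + 1) * K ^ r := by gcongr
      _ ≤ ε := hr
    rw [Function.iterate_succ_apply']
    have hKpow : 1 ≤ K ^ (k + 1) := one_le_pow₀ hK
    constructor
    · exact add_nonneg ht (mul_nonneg hl (sub_nonneg.2 (one_le_exp hv0)))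
    · calc poissonStep l t v ≤ t + l * exp ε * v := poissonStep_le hl hv0 hvε
        _ ≤ t * K ^ (k + 1) + K * (t * (k + 1) * K ^ k) := by gcongr; nlinarith
        _ = t * ((k + 1 : ℕ) + 1) * K ^ (k + 1) := by push_cast; ring

theorem mul_add_one_le_exp_mul_div {δ C r : ℝ} (hδ : 0 < δ) (hC : 0 ≤ C) (hr1 : 1 ≤ r)
    (hr : 12 * (C + 1) ≤ δ ^ 3 * r) :
    C * r + 1 ≤ exp (δ * r) / (r + 1) := by
  rw [le_div_iff₀ (by linarith)]
  have hcube : (δ * r) ^ 3 / 6 ≤ exp (δ * r) := by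
    simpa [Nat.factorial] using pow_div_factorial_le_exp (x := δ * r) (by positivity) 3
  calc (C * r + 1) * (r + 1) ≤ (C + 1) * r * (2 * r) := by gcongr <;> nlinarith
    _ = 2 * (C + 1) * r ^ 2 := by ring
    _ ≤ δ ^ 3 * r / 6 * r ^ 2 := by gcongr; linarith
    _ = (δ * r) ^ 3 / 6 := by ring
    _ ≤ exp (δ * r) := hcube

theorem eventually_exists_iterate_poissonStep_sub_le {l θ M : ℝ} (hl : 1 ≤ l)
    (hθ : log l < θ) (hM : 0 ≤ M) :
    ∀ᶠ r : ℕ in atTop,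
      ∃ t ≥ 0, (poissonStep l t)^[r] t - t * exp (θ * r) ≤ -M * r := by
  have hl0 : 0 < l := by linarith
  set ε := (θ - log l) / 2 with hεdef
  have hε : 0 < ε := by linarith
  set K := exp (θ - ε) with hKdef
  have hlK : l * exp ε = K := by
    rw [← exp_log hl0, ← exp_add, hKdef]
    congr 1
    linarith
  have hK : 1 ≤ K := one_le_exp (by linarith [log_nonneg hl])
  filter_upwards [(tendsto_natCast_atTop_atTop (R := ℝ)).eventually
    (eventually_ge_atTop (max 1 (12 * (M / ε + 1) / ε ^ 3)))] with r hr
  have hr1 : (1 : ℝ) ≤ r := le_of_max_le_left hr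
  have hrε : 12 * (M / ε + 1) ≤ ε ^ 3 * r := by
    have := le_of_max_le_right hr
    rw [div_le_iff₀ (by positivity)] at this
    linarith
  set t := ε / ((r + 1) * K ^ r) with htdef
  have htK : t * (r + 1) * K ^ r = ε := by rw [htdef]; field_simp
  have ht : 0 ≤ t := by positivity
  have hvr : (poissonStep l t)^[r] t ≤ ε :=
    (iterate_poissonStep_le hl0.le ht hK hlK.le htK.le r le_rfl).2.trans htK.le
  have hta : t * exp (θ * r) = ε * (exp (ε * r) / (r + 1)) := by
    have : exp (θ * r) = K ^ r * exp (ε * r) := by rw [← exp_nat_mul, ← exp_add]; ring_nf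
    rw [this, htdef]
    field_simp
  have hgrowth := mul_add_one_le_exp_mul_div hε (by positivity) hr1 hrε
  have : ε * (M / ε * r + 1) = M * r + ε := by field_simp
  refine ⟨t, ht, ?_⟩
  nlinarith [mul_le_mul_of_nonneg_left hgrowth hε.le]

end GaltonWatson

/-- Fix `λ ≥ 1` and let `(Z_ℓ)` be a Galton–Watson process with Poisson(λ) offspring
distribution. Then for every real `θ > log λ`,
`(1/r)·log P(∑_{ℓ=0}^{r} Z_ℓ > e^{θ r}) → −∞` as `r → ∞`; i.e. for every `M > 0` there
exists `R` such that for all `r ≥ R`, `P(∑_{ℓ=0}^{r} Z_ℓ > e^{θ r}) ≤ e^{−M r}`. -/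
theorem stmt_7 (l : ℝ) (hl : 1 ≤ l)
    (Ω : Type*) [MeasurableSpace Ω] (P : Measure Ω) [IsProbabilityMeasure P]
    (ξ : ℕ → ℕ → Ω → ℕ) (Z : ℕ → Ω → ℕ)
    (hmeas : ∀ ℓ i, Measurable (ξ ℓ i))
    (hind : iIndepFun (fun q : ℕ × ℕ => ξ q.1 q.2) P)
    (hdist : ∀ ℓ i k, P {ω | ξ ℓ i ω = k}
        = ENNReal.ofReal (l ^ k * Real.exp (-l) / (Nat.factorial k)))
    (hZ0 : ∀ ω, Z 0 ω = 1)
    (hZrec : ∀ ℓ ω, Z (ℓ + 1) ω = ∑ i ∈ Finset.range (Z ℓ ω), ξ ℓ i ω)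
    (θ : ℝ) (hθ : Real.log l < θ) :
    ∀ M : ℝ, 0 < M → ∃ R : ℕ, ∀ r : ℕ, R ≤ r →
      P {ω | Real.exp (θ * r) < ∑ ℓ ∈ Finset.range (r + 1), (Z ℓ ω : ℝ)}
        ≤ ENNReal.ofReal (Real.exp (-M * r)) := by
  intro M hM
  have hGW : GaltonWatson.IsPoissonGaltonWatson P l ξ Z := ⟨hmeas, hind, hdist, hZ0, hZrec⟩
  obtain ⟨R, hR⟩ := Filter.eventually_atTop.1
    (GaltonWatson.eventually_exists_iterate_poissonStep_sub_le hl hθ hM.le)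
  refine ⟨R, fun r hr => ?_⟩
  obtain ⟨t, ht, hexponent⟩ := hR r hr
  calc P {ω | Real.exp (θ * r) < ∑ ℓ ∈ Finset.range (r + 1), (Z ℓ ω : ℝ)}
      ≤ ENNReal.ofReal
          (Real.exp ((GaltonWatson.poissonStep l t)^[r] t - t * Real.exp (θ * r))) :=
        hGW.measure_lt_sum_generations_le (by linarith) ht _ r
    _ ≤ ENNReal.ofReal (Real.exp (-M * r)) :=
        ENNReal.ofReal_le_ofReal (Real.exp_le_exp.2 hexponent)
end

section
/- Fix λ > 0. Let (Z_n)_{n≥0} and (Z′_n)_{n≥0} be two independent Galton–Watson processes, each with Poisson(λ) offspring distribution. Then P(Z_n = Z′_n and Z_n ≥ 1 for all n ≥ 1) = 0. -/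
/-!
If the two processes agree and are alive up to generation `n`, then `Z_{n+1} = Z'_{n+1}` forces
the offspring count `ξ_{n,0}` of the first individual of generation `n` of `Z` to equal
`Z'_{n+1} - ∑_{0 < i < Z_n} ξ_{n,i}`, a function of the other offspring variables only.
By independence this costs a factor at most the largest Poisson atom, which is at most
`c := 1 - min(e^{-λ}, λe^{-λ}) < 1`; hence agreement up to generation `n` has probability
at most `cⁿ`.
-/

open MeasureTheory ProbabilityTheory Finset
open scoped ENNReal

section General

variable {Ω β M : Type*} [MeasurableSpace β]

lemma measurable_sum_range_random {m : MeasurableSpace Ω} [AddCommMonoid M] [MeasurableSpace M]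
    [MeasurableAdd₂ M] {N : Ω → ℕ} {f : ℕ → Ω → M} (hN : Measurable N)
    (hf : ∀ i, Measurable (f i)) :
    Measurable fun ω => ∑ i ∈ range (N ω), f i ω :=
  (measurable_from_prod_countable_right (f := fun p : ℕ × Ω => ∑ i ∈ range p.1, f i p.2)
    fun m => Finset.measurable_sum (range m) fun i _ => hf i).comp (hN.prodMk measurable_id)

abbrev subfamilySigma {ι : Type*} (f : ι → Ω → β) (S : Set ι) : MeasurableSpace Ω :=
  ⨆ i ∈ S, MeasurableSpace.comap (f i) ‹_›

lemma measurable_subfamilySigma {ι : Type*} {f : ι → Ω → β} {S : Set ι} {i : ι} (hi : i ∈ S) :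
    Measurable[subfamilySigma f S] (f i) :=
  measurable_iff_comap_le.2 (le_iSup₂ (f := fun j (_ : j ∈ S) => MeasurableSpace.comap (f j) _)
    i hi)

lemma subfamilySigma_le {ι : Type*} [mΩ : MeasurableSpace Ω] {f : ι → Ω → β}
    (hf : ∀ i, Measurable (f i)) (S : Set ι) : subfamilySigma f S ≤ mΩ :=
  iSup₂_le fun i _ => (hf i).comap_le

lemma indep_subfamilySigma_compl {ι : Type*} [MeasurableSpace Ω] {μ : Measure Ω}
    {f : ι → Ω → β} (hf : ∀ i, Measurable (f i)) (hind : iIndepFun f μ) (S : Set ι) :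
    Indep (subfamilySigma f Sᶜ) (subfamilySigma f S) μ :=
  indep_iSup_of_disjoint (fun i => (hf i).comap_le) hind.iIndep disjoint_compl_left

lemma measure_preimage_singleton_le_one_sub [MeasurableSingletonClass β] [MeasurableSpace Ω]
    {μ : Measure Ω} [IsProbabilityMeasure μ] {X : Ω → β} (hX : Measurable X) {a b : β}
    (hab : a ≠ b) : μ (X ⁻¹' {b}) ≤ 1 - μ (X ⁻¹' {a}) := by
  rw [← prob_compl_eq_one_sub (hX (measurableSet_singleton a))]
  exact measure_mono fun ω hb ha => hab (ha.symm.trans hb)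

lemma exists_lt_one_forall_measure_preimage_singleton_le [MeasurableSingletonClass β]
    [MeasurableSpace Ω] {μ : Measure Ω} [IsProbabilityMeasure μ] {ι : Type*} {X : ι → Ω → β}
    (hX : ∀ i, Measurable (X i)) {p : β → ℝ≥0∞} (hp : ∀ i b, μ (X i ⁻¹' {b}) = p b)
    {a₀ a₁ : β} (ha : a₀ ≠ a₁) (hp₀ : p a₀ ≠ 0) (hp₁ : p a₁ ≠ 0) :
    ∃ c < 1, ∀ i b, μ (X i ⁻¹' {b}) ≤ c := by
  refine ⟨1 - min (p a₀) (p a₁),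
    ENNReal.sub_lt_self ENNReal.one_ne_top one_ne_zero (by simp [hp₀, hp₁]), fun i b => ?_⟩
  obtain ⟨a, hab, hpa⟩ : ∃ a, a ≠ b ∧ min (p a₀) (p a₁) ≤ p a := by
    rcases eq_or_ne a₀ b with rfl | h
    · exact ⟨a₁, ha.symm, min_le_right _ _⟩
    · exact ⟨a₀, h, min_le_left _ _⟩
  calc μ (X i ⁻¹' {b}) ≤ 1 - μ (X i ⁻¹' {a}) := measure_preimage_singleton_le_one_sub (hX i) hab
    _ ≤ 1 - min (p a₀) (p a₁) := by rw [hp i a]; exact tsub_le_tsub_left hpa 1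

lemma measure_inter_setOf_eq_le_of_indep [Countable β] [MeasurableSingletonClass β]
    {m₁ m₂ mΩ : MeasurableSpace Ω} {μ : Measure Ω} (h₁ : m₁ ≤ mΩ) (hind : Indep m₁ m₂ μ)
    {X Y : Ω → β} (hX : Measurable[m₂] X) (hY : Measurable[m₁] Y) {A : Set Ω}
    (hA : MeasurableSet[m₁] A) {c : ℝ≥0∞} (hc : ∀ b, μ (X ⁻¹' {b}) ≤ c) :
    μ (A ∩ {ω | X ω = Y ω}) ≤ c * μ A := by
  have hAY : ∀ b, MeasurableSet[m₁] (A ∩ Y ⁻¹' {b}) := fun b => hA.inter (hY (.singleton b))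
  have hunion : ⋃ b, A ∩ Y ⁻¹' {b} = A := by
    rw [← Set.inter_iUnion, ← Set.preimage_iUnion, Set.iUnion_of_singleton, Set.preimage_univ,
      Set.inter_univ]
  calc μ (A ∩ {ω | X ω = Y ω}) = μ (⋃ b, A ∩ Y ⁻¹' {b} ∩ X ⁻¹' {b}) := by
        congr 1; ext ω; simp [eq_comm]
    _ ≤ ∑' b, μ (A ∩ Y ⁻¹' {b} ∩ X ⁻¹' {b}) := measure_iUnion_le _
    _ = ∑' b, μ (A ∩ Y ⁻¹' {b}) * μ (X ⁻¹' {b}) :=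
        tsum_congr fun b => (Indep_iff _ _ _).1 hind _ _ (hAY b) (hX (.singleton b))
    _ ≤ ∑' b, μ (A ∩ Y ⁻¹' {b}) * c := ENNReal.tsum_le_tsum fun b => by gcongr; exact hc b
    _ = c * μ A := by
        rw [ENNReal.tsum_mul_right, mul_comm, ← measure_iUnion
          (fun b b' h => ((pairwise_disjoint_fiber Y h).mono Set.inter_subset_right
            Set.inter_subset_right)) fun b => h₁ _ (hAY b), hunion]

end General

section GaltonWatson

variable {Ω : Type*}

lemma measurable_of_galtonWatson_rec {m : MeasurableSpace Ω} {ξ : ℕ → ℕ → Ω → ℕ}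
    {Z : ℕ → Ω → ℕ} (h0 : Measurable (Z 0))
    (hrec : ∀ ℓ ω, Z (ℓ + 1) ω = ∑ i ∈ range (Z ℓ ω), ξ ℓ i ω) {n : ℕ}
    (hξ : ∀ ℓ < n, ∀ i, Measurable (ξ ℓ i)) : ∀ k ≤ n, Measurable (Z k) := by
  intro k hk
  induction k with
  | zero => exact h0
  | succ k ih =>
    rw [show Z (k + 1) = _ from funext (hrec k)]
    exact measurable_sum_range_random (ih (by omega)) (hξ k (by omega))

lemma galtonWatson_succ_eq_add {ξ : ℕ → ℕ → Ω → ℕ} {Z : ℕ → Ω → ℕ}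
    (hrec : ∀ ℓ ω, Z (ℓ + 1) ω = ∑ i ∈ range (Z ℓ ω), ξ ℓ i ω) {n : ℕ} {ω : Ω}
    (h : 1 ≤ Z n ω) :
    Z (n + 1) ω = ξ n 0 ω + ∑ i ∈ range (Z n ω - 1), ξ n (i + 1) ω := by
  rw [hrec, ← Nat.sub_add_cancel h, sum_range_succ', add_comm, Nat.add_sub_cancel]

def coincideAliveUpTo (Z Z' : ℕ → Ω → ℕ) (n : ℕ) : Set Ω :=
  {ω | ∀ k ≤ n, Z k ω = Z' k ω ∧ 1 ≤ Z k ω}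

lemma measurableSet_coincideAliveUpTo {m : MeasurableSpace Ω} {Z Z' : ℕ → Ω → ℕ} {n : ℕ}
    (hZ : ∀ k ≤ n, Measurable (Z k)) (hZ' : ∀ k ≤ n, Measurable (Z' k)) :
    MeasurableSet (coincideAliveUpTo Z Z' n) := by
  simp only [coincideAliveUpTo, Set.ofPred_forall]
  exact .iInter fun k => .iInter fun hk =>
    (measurableSet_eq_fun (hZ k hk) (hZ' k hk)).inter (hZ k hk measurableSet_Ici)

lemma coincideAliveUpTo_succ_subset {ξ : ℕ → ℕ → Ω → ℕ} {Z Z' : ℕ → Ω → ℕ}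
    (hrec : ∀ ℓ ω, Z (ℓ + 1) ω = ∑ i ∈ range (Z ℓ ω), ξ ℓ i ω) (n : ℕ) :
    coincideAliveUpTo Z Z' (n + 1) ⊆ coincideAliveUpTo Z Z' n ∩
      {ω | ξ n 0 ω = Z' (n + 1) ω - ∑ i ∈ range (Z n ω - 1), ξ n (i + 1) ω} := by
  intro ω hω
  have hn : ω ∈ coincideAliveUpTo Z Z' n := fun k hk => hω k (by omega)
  refine ⟨hn, ?_⟩
  have := galtonWatson_succ_eq_add hrec (hn n le_rfl).2
  simp only [Set.mem_ofPred_eq, ← (hω (n + 1) le_rfl).1, this, Nat.add_sub_cancel]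

lemma measure_coincideAliveUpTo_succ_le [MeasurableSpace Ω] {P : Measure Ω}
    {ξ : Bool → ℕ → ℕ → Ω → ℕ} {Z Z' : ℕ → Ω → ℕ}
    (hmeas : ∀ b ℓ i, Measurable (ξ b ℓ i))
    (hind : iIndepFun (fun q : Bool × ℕ × ℕ => ξ q.1 q.2.1 q.2.2) P)
    (hZ0 : ∀ ω, Z 0 ω = 1) (hZ'0 : ∀ ω, Z' 0 ω = 1)
    (hZrec : ∀ ℓ ω, Z (ℓ + 1) ω = ∑ i ∈ range (Z ℓ ω), ξ true ℓ i ω)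
    (hZ'rec : ∀ ℓ ω, Z' (ℓ + 1) ω = ∑ i ∈ range (Z' ℓ ω), ξ false ℓ i ω)
    {c : ℝ≥0∞} (n : ℕ) (hatom : ∀ k, P (ξ true n 0 ⁻¹' {k}) ≤ c) :
    P (coincideAliveUpTo Z Z' (n + 1)) ≤ c * P (coincideAliveUpTo Z Z' n) := by
  let f (q : Bool × ℕ × ℕ) : Ω → ℕ := ξ q.1 q.2.1 q.2.2
  have hf : ∀ q, Measurable (f q) := fun q => hmeas q.1 q.2.1 q.2.2
  have hξF : ∀ b ℓ i, (b, ℓ, i) ≠ (true, n, 0) →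
      Measurable[subfamilySigma f {(true, n, 0)}ᶜ] (ξ b ℓ i) := fun b ℓ i h =>
    measurable_subfamilySigma (f := f) (i := (b, ℓ, i)) h
  have hZF : ∀ k ≤ n, Measurable[subfamilySigma f {(true, n, 0)}ᶜ] (Z k) :=
    measurable_of_galtonWatson_rec (ξ := ξ true)
      (by rw [show Z 0 = _ from funext hZ0]; exact measurable_const) hZrec
      fun ℓ hℓ i => hξF _ _ _ (by simp only [ne_eq, Prod.mk.injEq, true_and, not_and]; omega)
  have hZ'F : ∀ k ≤ n + 1, Measurable[subfamilySigma f {(true, n, 0)}ᶜ] (Z' k) :=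
    measurable_of_galtonWatson_rec (ξ := ξ false)
      (by rw [show Z' 0 = _ from funext hZ'0]; exact measurable_const) hZ'rec
      fun ℓ _ i => hξF _ _ _ (by simp)
  have hYF : Measurable[subfamilySigma f {(true, n, 0)}ᶜ]
      fun ω => Z' (n + 1) ω - ∑ i ∈ range (Z n ω - 1), ξ true n (i + 1) ω :=
    (hZ'F _ le_rfl).sub
      (measurable_sum_range_random ((hZF n le_rfl).sub_const 1) fun i => hξF _ _ _ (by simp))
  calc P (coincideAliveUpTo Z Z' (n + 1))
      ≤ P (coincideAliveUpTo Z Z' n ∩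
          {ω | ξ true n 0 ω = Z' (n + 1) ω - ∑ i ∈ range (Z n ω - 1), ξ true n (i + 1) ω}) :=
        measure_mono (coincideAliveUpTo_succ_subset hZrec n)
    _ ≤ c * P (coincideAliveUpTo Z Z' n) :=
        measure_inter_setOf_eq_le_of_indep (subfamilySigma_le hf _)
          (indep_subfamilySigma_compl hf hind _)
          (measurable_subfamilySigma (f := f) (S := {(true, n, 0)}) rfl) hYF
          (measurableSet_coincideAliveUpTo hZF fun k hk => hZ'F k (by omega)) hatom

end GaltonWatson

/-- Fix `λ > 0`. Let `(Z_n)` and `(Z′_n)` be two independent Galton–Watson processes,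
each with Poisson(λ) offspring distribution (built from two independent i.i.d. arrays,
all variables mutually independent). Then
`P(Z_n = Z′_n and Z_n ≥ 1 for all n ≥ 1) = 0`. -/
theorem stmt_9 (l : ℝ) (hl : 0 < l)
    (Ω : Type*) [MeasurableSpace Ω] (P : Measure Ω) [IsProbabilityMeasure P]
    (ξ : Bool → ℕ → ℕ → Ω → ℕ) (Z Z' : ℕ → Ω → ℕ)
    (hmeas : ∀ b ℓ i, Measurable (ξ b ℓ i))
    (hind : iIndepFun
      (fun q : Bool × ℕ × ℕ => ξ q.1 q.2.1 q.2.2) P)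
    (hdist : ∀ b ℓ i k, P {ω | ξ b ℓ i ω = k}
        = ENNReal.ofReal (l ^ k * Real.exp (-l) / (Nat.factorial k)))
    (hZ0 : ∀ ω, Z 0 ω = 1) (hZ'0 : ∀ ω, Z' 0 ω = 1)
    (hZrec : ∀ ℓ ω, Z (ℓ + 1) ω = ∑ i ∈ Finset.range (Z ℓ ω), ξ true ℓ i ω)
    (hZ'rec : ∀ ℓ ω, Z' (ℓ + 1) ω = ∑ i ∈ Finset.range (Z' ℓ ω), ξ false ℓ i ω) :
    P {ω | ∀ n : ℕ, 1 ≤ n → Z n ω = Z' n ω ∧ 1 ≤ Z n ω} = 0 := by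
  obtain ⟨c, hc1, hatom⟩ := exists_lt_one_forall_measure_preimage_singleton_le
    (X := fun n => ξ true n 0) (fun n => hmeas true n 0) (fun n k => hdist true n 0 k)
    zero_ne_one (ENNReal.ofReal_pos.2 (by positivity)).ne'
    (ENNReal.ofReal_pos.2 (by positivity)).ne'
  have hpow : ∀ n, P (coincideAliveUpTo Z Z' n) ≤ c ^ n := by
    intro n
    induction n with
    | zero => simpa using prob_le_one
    | succ n ih =>
      calc P (coincideAliveUpTo Z Z' (n + 1)) ≤ c * P (coincideAliveUpTo Z Z' n) :=
            measure_coincideAliveUpTo_succ_le hmeas hind hZ0 hZ'0 hZrec hZ'rec n (hatom n)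
        _ ≤ c ^ (n + 1) := by rw [pow_succ']; gcongr
  have hsub : ∀ n, {ω | ∀ n : ℕ, 1 ≤ n → Z n ω = Z' n ω ∧ 1 ≤ Z n ω} ⊆ coincideAliveUpTo Z Z' n
  | _, _, _, 0, _ => by simp [hZ0, hZ'0]
  | _, _, hω, k + 1, _ => hω (k + 1) k.succ_pos
  exact le_antisymm (ge_of_tendsto' (ENNReal.tendsto_pow_atTop_nhds_zero_of_lt_one hc1)
    fun n => (measure_mono (hsub n)).trans (hpow n)) bot_le
end

section
/- Let G be a connected simple graph on a vertex set V, and let v, w ∈ V be joined by a walk in G all of whose edges are bridges of G (i.e., v and w lie in a common bridging-tree). Then there is exactly one path in G from v to w: a path exists, and any two paths in G from v to w are equal. -/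
/-!
Shortening the given walk gives a path `p` all of whose edges are bridges; it is the only path.
Write `p = v ~ u ⋯ w`. Any path `q` from `v` to `w`, followed by the tail of `p` reversed, is a
walk from `v` to `u`, so it crosses the bridge `s(v, u)`; the tail of `p` does not, hence `q`
does. Since `q` visits `v` only at its start, `s(v, u)` is the first edge of `q`, and we conclude
by induction on `p`.
-/

namespace SimpleGraph

variable {V : Type*} {G : SimpleGraph V}

lemma IsBridge.mem_edges_of_notMem_edges {v u w : V} (he : G.IsBridge s(v, u))
    {p : G.Walk u w} (hp : s(v, u) ∉ p.edges) (q : G.Walk v w) : s(v, u) ∈ q.edges := by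
  have hmem := isBridge_iff_forall_walk_mem_edges.mp he (q.append p.reverse)
  simpa [Walk.edges_append, Walk.edges_reverse, hp] using hmem

namespace Walk

lemma IsPath.eq_of_forall_isBridge {v w : V} {p : G.Walk v w} (hp : p.IsPath)
    (hb : ∀ e ∈ p.edges, G.IsBridge e) {q : G.Walk v w} (hq : q.IsPath) : q = p := by
  induction p with
  | nil => exact (isPath_iff_nil.mp hq).eq_nil
  | @cons v u w hvu p ih =>
    have hp_tail : s(v, u) ∉ p.edges := (List.nodup_cons.mp hp.edges_nodup).1
    have hq_mem := (hb _ (by simp)).mem_edges_of_notMem_edges hp_tail q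
    cases q with
    | nil => simp at hq_mem
    | @cons _ x _ hvx q =>
      rw [cons_isPath_iff] at hp hq
      obtain rfl : x = u := by
        rcases List.mem_cons.mp (edges_cons hvx q ▸ hq_mem) with hfirst | hlater
        · rcases Sym2.eq_iff.mp hfirst with ⟨-, hxu⟩ | ⟨hvu', -⟩
          · exact hxu.symm
          · exact absurd hvu' hvx.ne
        · exact absurd (q.fst_mem_support_of_mem_edges hlater) hq.2
      rw [ih hp.1 (fun e he => hb e (by simp [he])) hq.1]

end Walk

end SimpleGraph

theorem stmt_11_general {V : Type*} (G : SimpleGraph V) (v w : V)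
    (h : ∃ p : G.Walk v w, ∀ e ∈ p.edges, G.IsBridge e) :
    (∃ p : G.Walk v w, p.IsPath) ∧
      ∀ p q : G.Walk v w, p.IsPath → q.IsPath → p = q := by
  classical
  obtain ⟨p₀, hb₀⟩ := h
  have hb : ∀ e ∈ p₀.bypass.edges, G.IsBridge e :=
    fun e he => hb₀ e (p₀.edges_bypass_subset_edges he)
  refine ⟨⟨p₀.bypass, p₀.bypass_isPath⟩, fun p q hp hq => ?_⟩
  rw [p₀.bypass_isPath.eq_of_forall_isBridge hb hp,
    p₀.bypass_isPath.eq_of_forall_isBridge hb hq]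

/-- Let `G` be a connected simple graph and let `v, w` be joined by a walk all of whose
edges are bridges of `G` (i.e. `v` and `w` lie in a common bridging-tree). Then there is
exactly one path in `G` from `v` to `w`: a path exists, and any two paths from `v` to `w`
are equal. -/
theorem stmt_11 {V : Type*} (G : SimpleGraph V) (hG : G.Connected) (v w : V)
    (h : ∃ p : G.Walk v w, ∀ e ∈ p.edges, G.IsBridge e) :
    (∃ p : G.Walk v w, p.IsPath) ∧
      ∀ p q : G.Walk v w, p.IsPath → q.IsPath → p = q :=
  stmt_11_general G v w h
end

section
/- Let G be a connected simple graph, let T be the vertex set of a bridging-tree of G (a connected component of the spanning subgraph of bridges), and let E_T be the set of bridge edges of G having both endpoints in T. Then for any two distinct vertices u₁ ≠ u₂ in T, there is no vertex z admitting both a walk in G from z to u₁ using no edge of E_T and a walk in G from z to u₂ using no edge of E_T. (Equivalently, the components G_{u₁} and G_{u₂} of u₁ and u₂ in the subgraph induced by the edges E(G) ∖ E_T intersect only within {u₁} and {u₂} respectively, so they are disjoint.) -/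
/-!
A walk `r` from `u₁` to `u₂` avoiding `E_T`, together with a path `π` of bridges from `u₁` to
`u₂` inside `T` (so all edges of `π` lie in `E_T`), would close a cycle through the first
edge `s(u₁, v)` of `π`: `r` followed by the rest of `π` reversed is a walk from `u₁` to `v`
avoiding that edge, which contradicts its being a bridge.
-/

namespace SimpleGraph.Walk

variable {V : Type*} {G : SimpleGraph V}

theorem eq_of_forall_isBridge_of_disjoint_edges {u v : V} (p : G.Walk u v)
    (hp : ∀ e ∈ p.edges, G.IsBridge e) (r : G.Walk u v)
    (hr : ∀ e ∈ r.edges, e ∉ p.edges) : u = v := by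
  classical
  have hpath : p.bypass.IsPath := p.bypass_isPath
  have hsub : p.bypass.edges ⊆ p.edges := p.edges_bypass_subset_edges
  cases hπ : p.bypass with
  | nil => rfl
  | @cons _ w _ _ tail =>
    rw [hπ] at hpath hsub
    have hbridge : G.IsBridge s(u, w) := hp _ (hsub List.mem_cons_self)
    have htail : s(u, w) ∉ tail.edges := (List.nodup_cons.mp hpath.edges_nodup).1
    have hcycle : s(u, w) ∉ (r.append tail.reverse).edges := by
      rw [edges_append, edges_reverse, List.mem_append, List.mem_reverse]
      rintro (h | h)
      · exact hr _ h (hsub List.mem_cons_self)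
      · exact htail h
    exact absurd (isBridge_iff_forall_walk_mem_edges.mp hbridge _) hcycle

theorem exists_forall_isBridge_of_mem_support {x y t : V} (p : G.Walk x t)
    (hp : ∀ e ∈ p.edges, G.IsBridge e) (hy : y ∈ p.support) :
    ∃ q : G.Walk y t, ∀ e ∈ q.edges, G.IsBridge e := by
  classical
  exact ⟨p.dropUntil y hy, fun e he => hp e (p.edges_dropUntil_subset_edges hy he)⟩

end SimpleGraph.Walk

open SimpleGraph Walk

theorem stmt_14_general {V : Type*} (G : SimpleGraph V) (t : V)
    (T : Set V)
    (hT : T = {x : V | ∃ p : G.Walk x t, ∀ e ∈ p.edges, G.IsBridge e})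
    (ET : Set (Sym2 V))
    (hET : ET = {e : Sym2 V | G.IsBridge e ∧ ∀ x ∈ e, x ∈ T})
    (u₁ u₂ : V) (h₁ : u₁ ∈ T) (h₂ : u₂ ∈ T) (hne : u₁ ≠ u₂) :
    ¬ ∃ z : V, (∃ p : G.Walk z u₁, ∀ e ∈ p.edges, e ∉ ET) ∧
        (∃ q : G.Walk z u₂, ∀ e ∈ q.edges, e ∉ ET) := by
  subst hT hET
  rintro ⟨z, ⟨p, hp⟩, ⟨q, hq⟩⟩
  obtain ⟨p₁, hp₁⟩ := h₁
  obtain ⟨p₂, hp₂⟩ := h₂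
  have mem_ET {x : V} (w : G.Walk x t) (hw : ∀ e ∈ w.edges, G.IsBridge e) {e : Sym2 V}
      (he : e ∈ w.edges) :
      G.IsBridge e ∧ ∀ y ∈ e, ∃ w' : G.Walk y t, ∀ e ∈ w'.edges, G.IsBridge e :=
    ⟨hw e he, fun _ hy =>
      w.exists_forall_isBridge_of_mem_support hw (mem_support_of_mem_edges he hy)⟩
  refine hne ((p₁.append p₂.reverse).eq_of_forall_isBridge_of_disjoint_edges ?_
    (p.reverse.append q) ?_)
  · simp only [edges_append, edges_reverse, List.mem_append, List.mem_reverse]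
    rintro e (he | he)
    exacts [hp₁ e he, hp₂ e he]
  · simp only [edges_append, edges_reverse, List.mem_append, List.mem_reverse]
    rintro e (he | he) (he' | he')
    exacts [hp e he (mem_ET p₁ hp₁ he'), hp e he (mem_ET p₂ hp₂ he'),
      hq e he (mem_ET p₁ hp₁ he'), hq e he (mem_ET p₂ hp₂ he')]

/-- Let `G` be a connected simple graph, let `T` be the vertex set of a bridging-tree of
`G` (the set of vertices joined to a fixed vertex `t` by a walk all of whose edges are
bridges), and let `E_T` be the set of bridge edges of `G` with both endpoints in `T`.
Then for any two distinct `u₁ ≠ u₂` in `T`, there is no vertex `z` admitting both a walk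
from `z` to `u₁` using no edge of `E_T` and a walk from `z` to `u₂` using no edge of
`E_T`. -/
theorem stmt_14 {V : Type*} (G : SimpleGraph V) (hG : G.Connected) (t : V)
    (T : Set V)
    (hT : T = {x : V | ∃ p : G.Walk x t, ∀ e ∈ p.edges, G.IsBridge e})
    (ET : Set (Sym2 V))
    (hET : ET = {e : Sym2 V | G.IsBridge e ∧ ∀ x ∈ e, x ∈ T})
    (u₁ u₂ : V) (h₁ : u₁ ∈ T) (h₂ : u₂ ∈ T) (hne : u₁ ≠ u₂) :
    ¬ ∃ z : V, (∃ p : G.Walk z u₁, ∀ e ∈ p.edges, e ∉ ET) ∧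
        (∃ q : G.Walk z u₂, ∀ e ∈ q.edges, e ∉ ET) :=
  stmt_14_general G t T hT ET hET u₁ u₂ h₁ h₂ hne
end

section
/- Let G be a finite connected simple graph on a nonempty vertex set and let r ≥ 1 be an integer. Suppose that for every vertex v of G there exists a vertex w with graph distance dist_G(v, w) ≥ r. Then G contains a path of length at least 2r − 2 (i.e., there exist vertices a, b and a path in G from a to b with at least 2r − 2 edges). -/
/-!
Take a longest path `P`, of length `L`, and its middle vertex `m = P_{⌊L/2⌋}`. Any walk from a
vertex `z` to `m` first meets `P` at some `c = P_t`, and the part `S` of it from `c` back to `z`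
meets `P` only in `c`. Extending either of the two halves of `P` at `c` by `S` gives a path, so
maximality of `P` forces `|S| ≤ min t (L - t)`. Hence `dist m z ≤ |⌊L/2⌋ - t| + |S| ≤ ⌈L/2⌉`:
the middle vertex of a longest path has eccentricity at most `⌈L/2⌉`, i.e. `L ≥ 2r - 1`.
-/

open SimpleGraph

namespace SimpleGraph.Walk

variable {V : Type*} {G : SimpleGraph V}

theorem IsPath.append_of_support_inter {u v w : V} {p : G.Walk u v} {q : G.Walk v w}
    (hp : p.IsPath) (hq : q.IsPath) (hpq : ∀ x ∈ p.support, x ∈ q.support → x = v) :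
    (p.append q).IsPath := by
  rw [isPath_def, support_append]
  have hv : v ∉ q.support.tail := by
    have := hq.support_nodup
    rw [← cons_tail_support] at this
    exact (List.nodup_cons.mp this).1
  refine hp.support_nodup.append hq.support_nodup.tail fun x hxp hxq => ?_
  exact hv (hpq x hxp (List.mem_of_mem_tail hxq) ▸ hxq)

theorem exists_isPath_to_first_mem {s : Set V} {z m : V} (p : G.Walk z m) (hm : m ∈ s) :
    ∃ c ∈ s, ∃ q : G.Walk z c, q.IsPath ∧ ∀ x ∈ q.support, x ∈ s → x = c := by
  suffices ∃ c ∈ s, ∃ q : G.Walk z c, ∀ x ∈ q.support, x ∈ s → x = c by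
    classical
    obtain ⟨c, hc, q, hq⟩ := this
    exact ⟨c, hc, q.bypass, q.bypass_isPath, fun x hx => hq x (q.support_bypass_subset_support hx)⟩
  induction p with
  | nil => exact ⟨_, hm, nil, by simp⟩
  | @cons u _ _ h p ih =>
    by_cases hu : u ∈ s
    · exact ⟨u, hu, nil, by simp⟩
    · obtain ⟨c, hc, q, hq⟩ := ih hm
      refine ⟨c, hc, cons h q, fun x hx hxs => ?_⟩
      rcases List.mem_cons.mp hx with rfl | hx
      · exact absurd hxs hu
      · exact hq x hx hxs

theorem dist_getVert_le {u v : V} (p : G.Walk u v) {i j : ℕ} (hij : i ≤ j) :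
    G.dist (p.getVert i) (p.getVert j) ≤ j - i := by
  have hend : (p.drop i).getVert (j - i) = p.getVert j := by
    rw [drop_getVert, Nat.add_sub_cancel' hij]
  calc G.dist (p.getVert i) (p.getVert j)
      ≤ ((p.drop i).take (j - i)).length := hend ▸ dist_le _
    _ ≤ j - i := by simp

def IsLongestPath {a b : V} (P : G.Walk a b) : Prop :=
  P.IsPath ∧ ∀ ⦃x y : V⦄ (q : G.Walk x y), q.IsPath → q.length ≤ P.length

theorem exists_isLongestPath [Fintype V] [Nonempty V] (G : SimpleGraph V) :
    ∃ (a b : V) (P : G.Walk a b), P.IsLongestPath := by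
  set A : Set ℕ := {n | ∃ (a b : V) (p : G.Walk a b), p.IsPath ∧ p.length = n}
  have hA : A.Nonempty := ⟨0, Classical.arbitrary V, _, nil, .nil, rfl⟩
  have hbdd : BddAbove A := ⟨Fintype.card V, fun _ ⟨_, _, _, hp, hn⟩ => hn ▸ hp.length_lt.le⟩
  obtain ⟨a, b, P, hP, hlen⟩ := Nat.sSup_mem hA hbdd
  exact ⟨a, b, P, hP, fun x y q hq => hlen ▸ le_csSup hbdd ⟨x, y, q, hq, rfl⟩⟩

section IsLongestPath

variable {a b z : V} {P : G.Walk a b}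

theorem IsLongestPath.add_length_le (hP : P.IsLongestPath) {t : ℕ} (ht : t ≤ P.length)
    (S : G.Walk (P.getVert t) z) (hS : S.IsPath)
    (hPS : ∀ x ∈ P.support, x ∈ S.support → x = P.getVert t) :
    t + S.length ≤ P.length ∧ P.length - t + S.length ≤ P.length := by
  have htake : ((P.take t).append S).IsPath :=
    (hP.1.take t).append_of_support_inter hS fun x hx =>
      hPS x ((isSubwalk_take P t).support_subset hx)
  have hdrop : ((P.drop t).reverse.append S).IsPath := by
    refine (hP.1.drop t).reverse.append_of_support_inter hS fun x hx => hPS x ?_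
    rw [support_reverse, List.mem_reverse] at hx
    exact (isSubwalk_drop P t).support_subset hx
  constructor
  · simpa [ht] using hP.2 _ htake
  · simpa using hP.2 _ hdrop

theorem IsLongestPath.dist_getVert_le (hP : P.IsLongestPath) {k : ℕ} (hk : k ≤ P.length)
    (z : V) : G.dist (P.getVert k) z ≤ max k (P.length - k) := by
  by_cases hreach : G.Reachable z (P.getVert k)
  swap
  · rw [dist_eq_zero_of_not_reachable fun h => hreach h.symm]
    exact Nat.zero_le _
  obtain ⟨p⟩ := hreach
  obtain ⟨c, hc, S, hS, hSP⟩ :=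
    p.exists_isPath_to_first_mem (s := {x | x ∈ P.support}) (P.getVert_mem_support k)
  obtain ⟨t, rfl, ht⟩ := mem_support_iff_exists_getVert.mp hc
  obtain ⟨hleft, hright⟩ := hP.add_length_le ht S.reverse hS.reverse fun x hxP hxS =>
    hSP x (by simpa using hxS) hxP
  have hmid : G.dist (P.getVert k) (P.getVert t) ≤ max (k - t) (t - k) := by
    rcases le_total k t with hkt | htk
    · exact (P.dist_getVert_le hkt).trans (le_max_right _ _)
    · exact dist_comm.le.trans ((P.dist_getVert_le htk).trans (le_max_left _ _))
  calc G.dist (P.getVert k) z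
      ≤ G.dist (P.getVert k) (P.getVert t) + G.dist (P.getVert t) z :=
        Reachable.dist_triangle_right ⟨S.reverse⟩ _
    _ ≤ max (k - t) (t - k) + S.reverse.length := add_le_add hmid (dist_le _)
    _ ≤ max k (P.length - k) := by simp only [length_reverse] at *; omega

end IsLongestPath

end SimpleGraph.Walk

theorem stmt_15_general {V : Type*} [Fintype V] [Nonempty V] (G : SimpleGraph V)
    (r : ℕ)
    (h : ∀ v : V, ∃ w : V, r ≤ G.dist v w) :
    ∃ (a b : V) (p : G.Walk a b), p.IsPath ∧ 2 * r - 2 ≤ p.length := by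
  obtain ⟨a, b, P, hP⟩ := Walk.exists_isLongestPath G
  obtain ⟨z, hz⟩ := h (P.getVert (P.length / 2))
  have hdist := hP.dist_getVert_le (Nat.div_le_self _ 2) z
  exact ⟨a, b, P, hP.1, by omega⟩

/-- Let `G` be a finite connected simple graph on a nonempty vertex set and let `r ≥ 1`.
Suppose every vertex `v` has some vertex `w` at graph distance at least `r` from it.
Then `G` contains a path of length at least `2r − 2`. -/
theorem stmt_15 {V : Type*} [Fintype V] [Nonempty V] (G : SimpleGraph V)
    (hG : G.Connected) (r : ℕ) (hr : 1 ≤ r)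
    (h : ∀ v : V, ∃ w : V, r ≤ G.dist v w) :
    ∃ (a b : V) (p : G.Walk a b), p.IsPath ∧ 2 * r - 2 ≤ p.length :=
  stmt_15_general G r h
end
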